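/- arXiv:1808.04830 — 6 statements merged into one kernel-verified Lean document; each statement's English description precedes it below -/
import Mathlib

section
/- For every homeomorphism ψ : 𝕋 → 𝕋 of the unit circle onto itself there exists a Möbius transformation μ(z) = ν·(z−a)/(1−ā·z), with |a| < 1 and ν ∈ 𝕋, such that the composition ψ ∘ μ is a normalized circle homeomorphism. -/
open Complex Metric Set Real

/-- The closed arc of the unit circle `{e^{it} : a ≤ t ≤ b}`. -/
noncomputable def arcCC (a b : ℝ) : Set ℂ :=
  (fun t : ℝ => Complex.exp (t * Complex.I)) '' Set.Icc a b

/-- A circle homeomorphism `ψ : 𝕋 → 𝕋` is *normalized* if the image of every arc of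
length `2π/3` is an arc of length at most `4π/3` (equivalently, is contained in some
arc of length `4π/3`). -/
def IsNormalized (ψ : ℂ → ℂ) : Prop :=
  ∀ θ : ℝ, ∃ θ' : ℝ, ψ '' arcCC θ (θ + 2 * π / 3) ⊆ arcCC θ' (θ' + 4 * π / 3)

/-!
Let `E = {z | z³ = 1}`. If `f : 𝕋 → 𝕋` is continuous and `f⁻¹(E) = E`, then each of the three
open arcs of `𝕋 \ E` is mapped into one of them by connectedness, so `f` maps each closed third
of the circle into a closed third together with `E`. An arc of length `2π/3` lies in two adjacent
thirds, and two thirds together with `E` always fit in an arc of length `4π/3`; hence `f` is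
normalized. Disk automorphisms act transitively on positively oriented triples of points of `𝕋`,
so there is a Möbius `μ` with `μ(E) = ψ⁻¹(E)`, and `f = ψ ∘ μ` has the required property.
-/

open ComplexConjugate

lemma exp_mul_I_mem_sphere (t : ℝ) : cexp (t * I) ∈ sphere (0 : ℂ) 1 := by
  simp [Complex.norm_exp_ofReal_mul_I]

lemma mul_conj_eq_one {z : ℂ} (hz : ‖z‖ = 1) : z * conj z = 1 := by
  rw [Complex.mul_conj, Complex.normSq_eq_norm_sq, hz]; norm_num

lemma exp_arg_mul_I_of_norm_eq_one {z : ℂ} (hz : ‖z‖ = 1) : cexp (arg z * I) = z := by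
  simpa [hz] using norm_mul_exp_arg_mul_I z

lemma exp_mul_I_mul_conj (x y : ℝ) :
    cexp (x * I) * conj (cexp (y * I)) = cexp (↑(x - y) * I) := by
  rw [← Complex.exp_conj, ← Complex.exp_add]
  simp [sub_eq_add_neg, add_mul]

lemma one_half_lt_cos_iff {x : ℝ} (hx : |x| ≤ π) : 1 / 2 < Real.cos x ↔ |x| < π / 3 := by
  rw [← Real.cos_abs, ← Real.cos_pi_div_three]
  exact Real.strictAntiOn_cos.lt_iff_gt ⟨by positivity, by linarith [pi_pos]⟩
    ⟨abs_nonneg x, hx⟩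

lemma exists_two_pi_mul_div_three_le_lt (θ : ℝ) :
    ∃ k : ℤ, 2 * π * k / 3 ≤ θ ∧ θ < 2 * π * (k + 1) / 3 := by
  obtain ⟨k, ⟨h₁, h₂⟩, -⟩ :=
    existsUnique_zsmul_near_of_pos' (by positivity : 0 < 2 * π / 3) θ
  refine ⟨k, ?_, ?_⟩ <;> simp only [zsmul_eq_mul] at h₁ h₂ <;> linarith

lemma arcCC_mono {a b a' b' : ℝ} (ha : a' ≤ a) (hb : b ≤ b') : arcCC a b ⊆ arcCC a' b' :=
  image_mono (Icc_subset_Icc ha hb)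

lemma arcCC_union_arcCC {a b c : ℝ} (hab : a ≤ b) (hbc : b ≤ c) :
    arcCC a b ∪ arcCC b c = arcCC a c := by
  rw [arcCC, arcCC, arcCC, ← image_union, Icc_union_Icc_eq_Icc hab hbc]

lemma arcCC_add_two_pi_mul (a b : ℝ) (n : ℤ) :
    arcCC (a + 2 * π * n) (b + 2 * π * n) = arcCC a b := by
  have hper : ∀ t : ℝ, cexp (↑(t + 2 * π * n) * I) = cexp (t * I) := fun t => by
    rw [Complex.exp_eq_exp_iff_exists_int]; exact ⟨n, by push_cast; ring⟩
  ext z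
  constructor
  · rintro ⟨t, ⟨h₁, h₂⟩, rfl⟩
    exact ⟨t - 2 * π * n, ⟨by linarith, by linarith⟩,
      by simpa using (hper (t - 2 * π * n)).symm⟩
  · rintro ⟨t, ⟨h₁, h₂⟩, rfl⟩
    exact ⟨t + 2 * π * n, ⟨by linarith, by linarith⟩, hper t⟩

def cubeRoots : Set ℂ := {z | z ^ 3 = 1}

lemma exp_mul_I_mem_cubeRoots_iff (t : ℝ) :
    cexp (t * I) ∈ cubeRoots ↔ ∃ n : ℤ, t = 2 * π * n / 3 := by
  simp only [cubeRoots, mem_ofPred_eq, ← Complex.exp_nat_mul, Complex.exp_eq_one_iff]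
  refine exists_congr fun n => ⟨fun h => ?_, fun h => by rw [h]; push_cast; ring⟩
  have : ((3 * t : ℝ) : ℂ) = ((n * (2 * π) : ℝ) : ℂ) :=
    mul_right_cancel₀ I_ne_zero (by push_cast at h ⊢; linear_combination h)
  have := Complex.ofReal_injective this
  linarith

lemma cubeRoots_subset_sphere : cubeRoots ⊆ sphere (0 : ℂ) 1 := by
  intro z hz
  have : ‖z‖ ^ 3 = 1 := by rw [← norm_pow, hz, norm_one]
  simpa using (pow_eq_one_iff_of_nonneg (norm_nonneg z) (by norm_num)).1 this

noncomputable def thirdArc (k : ℤ) : Set ℂ := arcCC (2 * π * k / 3) (2 * π * (k + 1) / 3)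

noncomputable def thirdArcMid (k : ℤ) : ℂ := cexp (↑(2 * π * k / 3 + π / 3) * I)

lemma norm_thirdArcMid (k : ℤ) : ‖thirdArcMid k‖ = 1 := Complex.norm_exp_ofReal_mul_I _

lemma mem_cubeRoots_of_re_mul_conj_thirdArcMid_eq {z : ℂ} (hz : ‖z‖ = 1) {k : ℤ}
    (h : (z * conj (thirdArcMid k)).re = 1 / 2) : z ∈ cubeRoots := by
  have hm := mul_conj_eq_one (norm_thirdArcMid k)
  obtain ⟨w, hw⟩ : ∃ w, w = z * conj (thirdArcMid k) := ⟨_, rfl⟩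
  have hww : w * conj w = 1 := mul_conj_eq_one (by simp [hw, hz, norm_thirdArcMid])
  have hw' : w + conj w = 1 := by rw [Complex.add_conj, hw, h]; norm_num
  -- `w = e^{± iπ/3}` is a root of `w² - w + 1`, and the midpoint cubes to `e^{iπ(2k+1)} = -1`
  have hw3 : w ^ 3 = -1 := by linear_combination (w + 1) * (w * hw' - hww)
  have hm3 : thirdArcMid k ^ 3 = -1 := by
    rw [← Complex.exp_pi_mul_I, thirdArcMid, ← Complex.exp_nat_mul,
      Complex.exp_eq_exp_iff_exists_int]
    exact ⟨k, by push_cast; ring⟩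
  have hzw : z = w * thirdArcMid k := by rw [hw]; linear_combination (-z) * hm
  show z ^ 3 = 1
  rw [hzw, mul_pow, hw3, hm3]; norm_num

lemma mem_thirdArc_of_lt_re_mul_conj_thirdArcMid {z : ℂ} (hz : ‖z‖ = 1) {k : ℤ}
    (h : 1 / 2 < (z * conj (thirdArcMid k)).re) : z ∈ thirdArc k := by
  obtain ⟨w, hw⟩ : ∃ w, w = z * conj (thirdArcMid k) := ⟨_, rfl⟩
  have hwn : ‖w‖ = 1 := by simp [hw, hz, norm_thirdArcMid]
  have harg : |arg w| < π / 3 := by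
    rw [← one_half_lt_cos_iff (abs_arg_le_pi w),
      Complex.cos_arg (by simp [← norm_ne_zero_iff, hwn]), hwn, div_one, hw]
    exact h
  have hzw : z = w * thirdArcMid k := by
    rw [hw]; linear_combination (-z) * mul_conj_eq_one (norm_thirdArcMid k)
  rw [abs_lt] at harg
  refine ⟨arg w + (2 * π * k / 3 + π / 3), ⟨by linarith, by linarith⟩, ?_⟩
  show cexp (_ * I) = _
  rw [hzw, thirdArcMid, Complex.ofReal_add, add_mul, Complex.exp_add,
    exp_arg_mul_I_of_norm_eq_one hwn]

lemma exists_lt_re_mul_conj_thirdArcMid {z : ℂ} (hz : ‖z‖ = 1) (hE : z ∉ cubeRoots) :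
    ∃ k : ℤ, 1 / 2 < (z * conj (thirdArcMid k)).re := by
  obtain ⟨k, hk₁, hk₂⟩ := exists_two_pi_mul_div_three_le_lt (arg z)
  have hk₁' : 2 * π * k / 3 < arg z := hk₁.lt_of_ne fun h => hE <| by
    rw [← exp_arg_mul_I_of_norm_eq_one hz, exp_mul_I_mem_cubeRoots_iff]; exact ⟨k, h.symm⟩
  have hx : |arg z - (2 * π * k / 3 + π / 3)| < π / 3 := by
    rw [abs_lt]; constructor <;> linarith
  refine ⟨k, ?_⟩
  rw [thirdArcMid, ← exp_arg_mul_I_of_norm_eq_one hz, exp_mul_I_mul_conj,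
    Complex.exp_ofReal_mul_I_re, one_half_lt_cos_iff (by linarith [pi_pos])]
  exact hx

lemma IsPreconnected.exists_subset_thirdArc {C : Set ℂ} (hC : IsPreconnected C)
    (hne : C.Nonempty) (hCS : C ⊆ sphere 0 1) (hCE : Disjoint C cubeRoots) :
    ∃ k : ℤ, C ⊆ thirdArc k := by
  obtain ⟨z, hz⟩ := hne
  obtain ⟨k, hk⟩ := exists_lt_re_mul_conj_thirdArcMid (mem_sphere_zero_iff_norm.1 (hCS hz))
    (hCE.notMem_of_mem_left hz)
  -- the half-plane `g > 1/2` cuts the third arc `k` out of the circle, and its boundary line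
  -- meets the circle only in cube roots
  let g : ℂ → ℝ := fun w => (w * conj (thirdArcMid k)).re
  have hg : Continuous g := by fun_prop
  have hcover : C ⊆ {w | 1 / 2 < g w} ∪ {w | g w < 1 / 2} := fun w hw =>
    (lt_or_gt_of_ne (a := g w) (b := 1 / 2) fun h => hCE.notMem_of_mem_left hw <|
      mem_cubeRoots_of_re_mul_conj_thirdArcMid_eq (mem_sphere_zero_iff_norm.1 (hCS hw)) h).symm
  have hsub := hC.subset_left_of_subset_union (isOpen_lt continuous_const hg)
    (isOpen_lt hg continuous_const)
    (disjoint_left.2 fun w (h₁ : 1 / 2 < g w) (h₂ : g w < 1 / 2) => lt_asymm h₁ h₂) hcover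
    ⟨z, hz, hk⟩
  exact ⟨k, fun w hw =>
    mem_thirdArc_of_lt_re_mul_conj_thirdArcMid (mem_sphere_zero_iff_norm.1 (hCS hw)) (hsub hw)⟩

lemma exists_image_thirdArc_subset {f : ℂ → ℂ} (hf : ContinuousOn f (sphere 0 1))
    (hmaps : MapsTo f (sphere 0 1) (sphere 0 1))
    (hE : ∀ z ∈ sphere (0 : ℂ) 1, f z ∈ cubeRoots ↔ z ∈ cubeRoots) (j : ℤ) :
    ∃ k : ℤ, f '' thirdArc j ⊆ thirdArc k ∪ cubeRoots := by
  have hj : 2 * π * j / 3 < 2 * π * (j + 1) / 3 := by linarith [pi_pos]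
  set U := (fun t : ℝ => cexp (t * I)) '' Ioo (2 * π * j / 3) (2 * π * (j + 1) / 3)
  have hUS : U ⊆ sphere 0 1 := by rintro _ ⟨t, -, rfl⟩; exact exp_mul_I_mem_sphere t
  have hUE : Disjoint U cubeRoots := by
    rintro V hVU hVE _ hx
    obtain ⟨t, ⟨ht₁, ht₂⟩, rfl⟩ := hVU hx
    obtain ⟨n, rfl⟩ := (exp_mul_I_mem_cubeRoots_iff t).1 (hVE hx)
    have h₁ : (j : ℝ) < n := by nlinarith [pi_pos]
    have h₂ : (n : ℝ) < j + 1 := by nlinarith [pi_pos]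
    norm_cast at h₁ h₂
    omega
  obtain ⟨k, hk⟩ := ((isPreconnected_Ioo.image _ (by fun_prop)).image f
    (hf.mono hUS)).exists_subset_thirdArc (((nonempty_Ioo.2 hj).image _).image f)
    ((image_mono hUS).trans hmaps.image_subset)
    (disjoint_left.2 fun _ ⟨z, hzU, hfz⟩ hfzE =>
      disjoint_left.1 hUE hzU ((hE z (hUS hzU)).1 (hfz ▸ hfzE)))
  refine ⟨k, ?_⟩
  rintro _ ⟨_, ⟨t, ⟨ht₁, ht₂⟩, rfl⟩, rfl⟩
  have hend : ∀ n : ℤ, f (cexp (↑(2 * π * n / 3) * I)) ∈ thirdArc k ∪ cubeRoots := fun n =>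
    Or.inr ((hE _ (exp_mul_I_mem_sphere _)).2 ((exp_mul_I_mem_cubeRoots_iff _).2 ⟨n, rfl⟩))
  rcases ht₁.eq_or_lt with rfl | ht₁
  · exact hend j
  rcases ht₂.eq_or_lt with rfl | ht₂
  · simpa using hend (j + 1)
  exact Or.inl (hk ⟨_, ⟨t, ⟨ht₁, ht₂⟩, rfl⟩, rfl⟩)

lemma exists_arcCC_subset_thirdArc_union (θ : ℝ) :
    ∃ m : ℤ, arcCC θ (θ + 2 * π / 3) ⊆ thirdArc m ∪ thirdArc (m + 1) := by
  obtain ⟨m, hm₁, hm₂⟩ := exists_two_pi_mul_div_three_le_lt θ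
  refine ⟨m, ?_⟩
  simp only [thirdArc, Int.cast_add, Int.cast_one]
  rw [arcCC_union_arcCC (by linarith [pi_pos]) (by linarith [pi_pos])]
  exact arcCC_mono hm₁ (by linarith)

lemma thirdArc_add_three_mul (k n : ℤ) : thirdArc (k + 3 * n) = thirdArc k := by
  rw [thirdArc, thirdArc, ← arcCC_add_two_pi_mul (2 * π * k / 3) _ n]
  congr 1 <;> push_cast <;> ring

lemma thirdArc_subset_arcCC {k l : ℤ} (h : (k - l) % 3 ≤ 1) :
    thirdArc k ⊆ arcCC (2 * π * l / 3) (2 * π * l / 3 + 4 * π / 3) := by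
  obtain ⟨d, n, rfl, hd₀, hd₁⟩ : ∃ d n : ℤ, k = l + d + 3 * n ∧ 0 ≤ d ∧ d ≤ 1 :=
    ⟨(k - l) % 3, (k - l) / 3, by omega, by omega, h⟩
  rw [thirdArc_add_three_mul, thirdArc]
  have h₀ : (0 : ℝ) ≤ d := by exact_mod_cast hd₀
  have h₁ : (d : ℝ) ≤ 1 := by exact_mod_cast hd₁
  push_cast
  exact arcCC_mono (by nlinarith [pi_pos]) (by nlinarith [pi_pos])

lemma cubeRoots_subset_arcCC (l : ℤ) :
    cubeRoots ⊆ arcCC (2 * π * l / 3) (2 * π * l / 3 + 4 * π / 3) := by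
  intro z hz
  have hzn := mem_sphere_zero_iff_norm.1 (cubeRoots_subset_sphere hz)
  rw [← exp_arg_mul_I_of_norm_eq_one hzn] at hz ⊢
  obtain ⟨n, hn⟩ := (exp_mul_I_mem_cubeRoots_iff _).1 hz
  rw [hn]
  by_cases h : (n - l) % 3 ≤ 1
  · refine thirdArc_subset_arcCC h ⟨_, ⟨le_rfl, by linarith [pi_pos]⟩, rfl⟩
  · refine thirdArc_subset_arcCC (k := n - 1) (by omega) ⟨_, ⟨?_, ?_⟩, rfl⟩ <;> push_cast <;>
      linarith [pi_pos]

lemma exists_thirdArc_union_subset_arcCC (k k' : ℤ) :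
    ∃ θ' : ℝ, thirdArc k ∪ thirdArc k' ∪ cubeRoots ⊆ arcCC θ' (θ' + 4 * π / 3) := by
  obtain ⟨l, hk, hk'⟩ : ∃ l : ℤ, (k - l) % 3 ≤ 1 ∧ (k' - l) % 3 ≤ 1 := by
    by_cases h : (k' - k) % 3 = 2
    exacts [⟨k - 1, by omega, by omega⟩, ⟨k, by omega, by omega⟩]
  exact ⟨_, union_subset (union_subset (thirdArc_subset_arcCC hk) (thirdArc_subset_arcCC hk'))
    (cubeRoots_subset_arcCC l)⟩

theorem isNormalized_of_forall_mem_cubeRoots_iff {f : ℂ → ℂ}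
    (hf : ContinuousOn f (sphere 0 1)) (hmaps : MapsTo f (sphere 0 1) (sphere 0 1))
    (hE : ∀ z ∈ sphere (0 : ℂ) 1, f z ∈ cubeRoots ↔ z ∈ cubeRoots) : IsNormalized f := by
  intro θ
  obtain ⟨m, hm⟩ := exists_arcCC_subset_thirdArc_union θ
  obtain ⟨k, hk⟩ := exists_image_thirdArc_subset hf hmaps hE m
  obtain ⟨k', hk'⟩ := exists_image_thirdArc_subset hf hmaps hE (m + 1)
  obtain ⟨θ', hθ'⟩ := exists_thirdArc_union_subset_arcCC k k'
  refine ⟨θ', (image_mono hm).trans ?_⟩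
  rw [image_union]
  exact (union_subset_union hk hk').trans (union_union_distrib_right _ _ _ ▸ hθ')

noncomputable def moebius (a ν z : ℂ) : ℂ := ν * (z - a) / (1 - conj a * z)

lemma moebius_denom_ne_zero {a z : ℂ} (ha : ‖a‖ < 1) (hz : ‖z‖ = 1) : 1 - conj a * z ≠ 0 := by
  refine sub_ne_zero.2 fun h => ?_
  have := congrArg norm h
  simp only [norm_one, norm_mul, Complex.norm_conj, hz, mul_one] at this
  linarith

lemma mapsTo_moebius {a ν : ℂ} (ha : ‖a‖ < 1) (hν : ‖ν‖ = 1) :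
    MapsTo (moebius a ν) (sphere 0 1) (sphere 0 1) := by
  intro z hz
  rw [mem_sphere_zero_iff_norm] at hz ⊢
  have hza : z - a ≠ 0 := sub_ne_zero.2 fun h => by rw [← h, hz] at ha; exact lt_irrefl _ ha
  have hden : 1 - conj a * z = z * conj (z - a) := by
    rw [map_sub]; linear_combination -mul_conj_eq_one hz
  rw [moebius, hden, norm_div, norm_mul, norm_mul, hν, hz, Complex.norm_conj, one_mul,
    div_self (norm_ne_zero_iff.2 hza)]

lemma injOn_moebius {a ν : ℂ} (ha : ‖a‖ < 1) (hν : ν ≠ 0) :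
    InjOn (moebius a ν) (sphere 0 1) := by
  intro z hz w hw h
  rw [mem_sphere_zero_iff_norm] at hz hw
  rw [moebius, moebius, div_eq_div_iff (moebius_denom_ne_zero ha hz)
    (moebius_denom_ne_zero ha hw)] at h
  have ha' : 1 - a * conj a ≠ 0 := by
    rw [Complex.mul_conj, Complex.normSq_eq_norm_sq]
    exact_mod_cast (by nlinarith [norm_nonneg a] : (1 : ℝ) - ‖a‖ ^ 2 ≠ 0)
  have : ν * ((z - w) * (1 - a * conj a)) = 0 := by linear_combination h
  simpa [hν, ha', sub_eq_zero] using this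

lemma continuousOn_moebius {a : ℂ} (ha : ‖a‖ < 1) (ν : ℂ) :
    ContinuousOn (moebius a ν) (sphere 0 1) :=
  ContinuousOn.div (by fun_prop) (by fun_prop) fun _ hz =>
    moebius_denom_ne_zero ha (mem_sphere_zero_iff_norm.1 hz)

/-- On the circle, `moebius (-β / α) (α / ᾱ) z = w / (z w̄)` with `w = α z + β`: it only depends
on the direction of `w`. -/
lemma moebius_neg_div_apply {α β z q : ℂ} {r : ℝ} (hα : α ≠ 0) (hr : r ≠ 0) (hz : ‖z‖ = 1)
    (hq : ‖q‖ = 1) (h : α * z + β = r * q) :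
    moebius (-β / α) (α / conj α) z = q ^ 2 / z := by
  have hz₀ : z ≠ 0 := norm_ne_zero_iff.1 (by rw [hz]; exact one_ne_zero)
  have hq₀ : conj q ≠ 0 := by simp [← norm_ne_zero_iff, hq]
  have hα₀ : conj α ≠ 0 := by simpa using hα
  have hconj : conj α + conj β * z = r * z * conj q := by
    have := congrArg conj h
    simp only [map_add, map_mul, Complex.conj_ofReal] at this
    linear_combination z * this - conj α * mul_conj_eq_one hz
  have hden : 1 - conj (-β / α) * z = r * z * conj q / conj α := by
    rw [← hconj, map_div₀, map_neg]; field_simp; ring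
  rw [moebius, hden, div_eq_div_iff (by simp [hα₀, hz₀, hq₀, hr]) hz₀]
  field_simp
  linear_combination h - (r * q : ℂ) * mul_conj_eq_one hq

noncomputable def ω : ℂ := (-1 + √3 * I) / 2

lemma sqrt_three_sq : (√3 : ℂ) ^ 2 = 3 := by
  rw [← Complex.ofReal_pow, Real.sq_sqrt (by norm_num)]; norm_num

lemma ω_sq : ω ^ 2 = -1 - ω := by
  rw [ω]; linear_combination (I ^ 2 / 4) * sqrt_three_sq + (3 / 4 : ℂ) * I_sq

lemma ω_pow_three : ω ^ 3 = 1 := by linear_combination (ω - 1) * ω_sq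

lemma norm_ω : ‖ω‖ = 1 := mem_sphere_zero_iff_norm.1 (cubeRoots_subset_sphere ω_pow_three)

lemma cubeRoots_eq : cubeRoots = {1, ω, ω ^ 2} := by
  ext z
  simp only [cubeRoots, mem_ofPred_eq, mem_insert_iff, mem_singleton_iff]
  constructor
  · intro h
    have : (z - 1) * ((z - ω) * (z - ω ^ 2)) = 0 := by
      linear_combination h - (z - 1) * z * ω_sq + (z - 1) * ω_pow_three
    simpa [sub_eq_zero, or_assoc] using this
  · rintro (rfl | rfl | rfl)
    · norm_num
    · exact ω_pow_three
    · rw [← pow_mul, mul_comm, pow_mul, ω_pow_three, one_pow]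

lemma ncard_cubeRoots : cubeRoots.ncard = 3 := by
  have hs : (0 : ℝ) < √3 := by positivity
  refine ncard_eq_three.2 ⟨1, ω, ω ^ 2, fun h => ?_, fun h => ?_, fun h => ?_, cubeRoots_eq⟩
  · have := congrArg re h; norm_num [ω] at this
  · have := congrArg re (h.trans ω_sq); norm_num [ω] at this
  · have := congrArg im (h.trans ω_sq); norm_num [ω] at this; linarith

lemma exists_mul_add_eq {x₀ x₁ x₂ : ℂ} (hx : x₀ + x₁ + x₂ = 0)
    (him : 0 < (x₀ * conj x₁).im) :
    ∃ α β : ℂ, ‖β‖ < ‖α‖ ∧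
      α + β = x₀ ∧ α * ω + β = ω ^ 2 * x₁ ∧ α * ω ^ 2 + β = ω * x₂ := by
  -- Fourier inversion on `{1, ω, ω²}`: `α = (x₀ + ω x₁ + ω² x₂) / 3`, `β = (x₀ + ω² x₁ + ω x₂) / 3`
  set α := ((3 + √3 * I) * x₀ + 2 * √3 * I * x₁) / 6
  set β := ((3 - √3 * I) * x₀ - 2 * √3 * I * x₁) / 6
  have hnorm : Complex.normSq α - Complex.normSq β = 2 * √3 / 3 * (x₀ * conj x₁).im := by
    simp only [α, β, Complex.normSq_apply, div_ofNat_re, div_ofNat_im, add_re, add_im, sub_re,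
      sub_im, mul_re, mul_im, re_ofNat, im_ofNat, ofReal_re, ofReal_im, I_re, I_im, conj_re,
      conj_im]
    ring
  refine ⟨α, β, ?_, by ring, ?_, ?_⟩
  · rw [← sq_lt_sq₀ (norm_nonneg _) (norm_nonneg _), Complex.sq_norm, Complex.sq_norm]
    nlinarith [(by positivity : (0 : ℝ) < √3)]
  · rw [ω_sq]; simp only [α, β, ω]; ring_nf; rw [sqrt_three_sq, I_sq]; ring
  · rw [ω_sq]; simp only [α, β, ω]; ring_nf; rw [sqrt_three_sq, I_sq]
    linear_combination ((1 : ℂ) / 2 - √3 * I / 2) * hx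

lemma sin_sub_mul_exp_add_eq_zero (u₀ u₁ u₂ : ℝ) :
    Real.sin (u₂ - u₁) * cexp (u₀ * I) - Real.sin (u₂ - u₀) * cexp (u₁ * I)
      + Real.sin (u₁ - u₀) * cexp (u₂ * I) = 0 := by
  simp only [Complex.exp_mul_I, ← Complex.ofReal_cos, ← Complex.ofReal_sin, Real.sin_sub]
  push_cast
  ring

lemma exists_moebius_of_lt {t₀ t₁ t₂ : ℝ} (h₀₁ : t₀ < t₁) (h₁₂ : t₁ < t₂)
    (h₂₀ : t₂ < t₀ + 2 * π) :
    ∃ a ν : ℂ, ‖a‖ < 1 ∧ ‖ν‖ = 1 ∧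
      moebius a ν '' cubeRoots = {cexp (t₀ * I), cexp (t₁ * I), cexp (t₂ * I)} := by
  -- With `E t = e^{it/2}` and `q_j = ω^{2j} E t_j`, `moebius_neg_div_apply` gives
  -- `μ(ω^j) = q_j² / ω^j = e^{i t_j}` as soon as `α ω^j + β ∈ ℝ q_j`. The real coefficients
  -- come from `sin_sub_mul_exp_add_eq_zero`; their signs, fixed by the cyclic order of the
  -- `t_j`, give `‖β‖ < ‖α‖`.
  set E := fun t : ℝ => cexp (↑(t / 2) * I)
  have hE : ∀ t : ℝ, E t ^ 2 = cexp (t * I) := fun t => by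
    rw [← Complex.exp_nat_mul]; push_cast; ring_nf
  have hEn : ∀ t : ℝ, ‖E t‖ = 1 := fun t => Complex.norm_exp_ofReal_mul_I _
  have hsin : ∀ {x y : ℝ}, x < y → y < x + 2 * π → 0 < Real.sin (y / 2 - x / 2) :=
    fun h h' => Real.sin_pos_of_pos_of_lt_pi (by linarith) (by linarith)
  have hr₀ := hsin h₁₂ (by linarith)
  have hr₁ := hsin (h₀₁.trans h₁₂) h₂₀
  have hr₂ := hsin h₀₁ (by linarith)
  have hx : Real.sin (t₂ / 2 - t₁ / 2) * E t₀ + (-Real.sin (t₂ / 2 - t₀ / 2) : ℝ) * E t₁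
      + Real.sin (t₁ / 2 - t₀ / 2) * E t₂ = 0 := by
    rw [Complex.ofReal_neg]
    linear_combination sin_sub_mul_exp_add_eq_zero (t₀ / 2) (t₁ / 2) (t₂ / 2)
  have him : 0 < (Real.sin (t₂ / 2 - t₁ / 2) * E t₀ *
      conj ((-Real.sin (t₂ / 2 - t₀ / 2) : ℝ) * E t₁)).im := by
    rw [map_mul, Complex.conj_ofReal, mul_mul_mul_comm, ← Complex.ofReal_mul,
      exp_mul_I_mul_conj, Complex.im_ofReal_mul, Complex.exp_ofReal_mul_I_im]
    rw [show t₀ / 2 - t₁ / 2 = -(t₁ / 2 - t₀ / 2) by ring, Real.sin_neg]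
    nlinarith [mul_pos hr₀ hr₁]
  obtain ⟨α, β, hαβ, h₀, h₁, h₂⟩ := exists_mul_add_eq hx him
  have hα : α ≠ 0 := norm_pos_iff.1 ((norm_nonneg β).trans_lt hαβ)
  refine ⟨-β / α, α / conj α, ?_, ?_, ?_⟩
  · rwa [norm_div, norm_neg, div_lt_one (norm_pos_iff.2 hα)]
  · rw [norm_div, Complex.norm_conj, div_self (norm_ne_zero_iff.2 hα)]
  have hω : ω ≠ 0 := norm_ne_zero_iff.1 (by rw [norm_ω]; exact one_ne_zero)
  have m₀ : moebius (-β / α) (α / conj α) 1 = cexp (t₀ * I) := by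
    rw [moebius_neg_div_apply hα hr₀.ne' norm_one (hEn t₀) (by rw [mul_one, h₀]), hE, div_one]
  have m₁ : moebius (-β / α) (α / conj α) ω = cexp (t₁ * I) := by
    rw [moebius_neg_div_apply (q := ω ^ 2 * E t₁) hα (neg_ne_zero.2 hr₁.ne') norm_ω
      (by rw [norm_mul, norm_pow, norm_ω, hEn, one_pow, one_mul]) (by rw [h₁]; ring),
      div_eq_iff hω, ← hE]
    linear_combination ω * E t₁ ^ 2 * ω_pow_three
  have m₂ : moebius (-β / α) (α / conj α) (ω ^ 2) = cexp (t₂ * I) := by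
    rw [moebius_neg_div_apply (q := ω * E t₂) hα hr₂.ne' (by rw [norm_pow, norm_ω, one_pow])
      (by rw [norm_mul, norm_ω, hEn, one_mul]) (by rw [h₂]; ring),
      div_eq_iff (pow_ne_zero 2 hω), ← hE]
    ring
  rw [cubeRoots_eq, image_insert_eq, image_insert_eq, image_singleton, m₀, m₁, m₂]

lemma exists_lt_lt_eq_of_ncard_eq_three {T : Set ℝ} (hT : T.ncard = 3) :
    ∃ t₀ t₁ t₂ : ℝ, t₀ < t₁ ∧ t₁ < t₂ ∧ T = {t₀, t₁, t₂} := by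
  obtain ⟨x, y, z, hxy, hxz, hyz, rfl⟩ := ncard_eq_three.1 hT
  rcases hxy.lt_or_gt with hxy | hxy <;> rcases hxz.lt_or_gt with hxz | hxz <;>
    rcases hyz.lt_or_gt with hyz | hyz <;>
    first
    | exact absurd (by linarith) (lt_irrefl x)
    | (refine ⟨x, y, z, ?_, ?_, rfl⟩ <;> assumption)
    | (refine ⟨x, z, y, ?_, ?_, by rw [pair_comm]⟩ <;> assumption)
    | (refine ⟨y, x, z, ?_, ?_, insert_comm _ _ _⟩ <;> assumption)
    | (refine ⟨y, z, x, ?_, ?_, by rw [insert_comm, pair_comm]⟩ <;> assumption)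
    | (refine ⟨z, x, y, ?_, ?_, by rw [pair_comm, insert_comm]⟩ <;> assumption)
    | (refine ⟨z, y, x, ?_, ?_, by rw [pair_comm, insert_comm, pair_comm]⟩ <;> assumption)

lemma exists_moebius_image_cubeRoots_eq {P : Set ℂ} (hPS : P ⊆ sphere 0 1) (hP : P.ncard = 3) :
    ∃ a ν : ℂ, ‖a‖ < 1 ∧ ‖ν‖ = 1 ∧ moebius a ν '' cubeRoots = P := by
  have hPn : ∀ z ∈ P, ‖z‖ = 1 := fun z hz => mem_sphere_zero_iff_norm.1 (hPS hz)
  have hinj : InjOn arg P := fun z hz w hw h =>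
    Complex.ext_norm_arg (by rw [hPn z hz, hPn w hw]) h
  obtain ⟨t₀, t₁, t₂, h₀₁, h₁₂, hT⟩ :=
    exists_lt_lt_eq_of_ncard_eq_three (hinj.ncard_image.trans hP)
  have hP' : (fun t : ℝ => cexp (t * I)) '' (arg '' P) = P := by
    rw [image_image]
    conv_rhs => rw [← image_id P]
    exact image_congr fun z hz => exp_arg_mul_I_of_norm_eq_one (hPn z hz)
  obtain ⟨z₀, -, hz₀⟩ : t₀ ∈ arg '' P := by rw [hT]; exact mem_insert _ _
  obtain ⟨z₂, -, hz₂⟩ : t₂ ∈ arg '' P := by rw [hT]; simp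
  obtain ⟨a, ν, ha, hν, himg⟩ := exists_moebius_of_lt h₀₁ h₁₂
    (by linarith [hz₀ ▸ neg_pi_lt_arg z₀, hz₂ ▸ arg_le_pi z₂])
  refine ⟨a, ν, ha, hν, ?_⟩
  rw [himg, ← hP', hT, image_insert_eq, image_insert_eq, image_singleton]

/-- **Lemma 2.2 (normalization).** For every circle homeomorphism `ψ : 𝕋 → 𝕋` there is a
Möbius transformation `μ(z) = ν (z − a)/(1 − ā z)`, with `|a| < 1` and `ν ∈ 𝕋`, such that
`ψ ∘ μ` is normalized. -/
theorem exists_moebius_normalizing (ψ : ℂ → ℂ)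
    (hcont : ContinuousOn ψ (sphere (0:ℂ) 1))
    (hbij : BijOn ψ (sphere (0:ℂ) 1) (sphere (0:ℂ) 1)) :
    ∃ a ν : ℂ, ‖a‖ < 1 ∧ ‖ν‖ = 1 ∧
      IsNormalized (fun z => ψ (ν * (z - a) / (1 - (starRingEnd ℂ) a * z))) := by
  have hP : (sphere 0 1 ∩ ψ ⁻¹' cubeRoots).ncard = 3 := by
    rw [← ncard_cubeRoots, ← (hbij.injOn.mono inter_subset_left).ncard_image,
      image_inter_preimage, hbij.image_eq, inter_eq_right.2 cubeRoots_subset_sphere]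
  obtain ⟨a, ν, ha, hν, himg⟩ := exists_moebius_image_cubeRoots_eq inter_subset_left hP
  have hν₀ : ν ≠ 0 := norm_ne_zero_iff.1 (by rw [hν]; exact one_ne_zero)
  refine ⟨a, ν, ha, hν, isNormalized_of_forall_mem_cubeRoots_iff
    (hcont.comp (continuousOn_moebius ha ν) (mapsTo_moebius ha hν))
    (hbij.mapsTo.comp (mapsTo_moebius ha hν)) fun z hz => ?_⟩
  show ψ (moebius a ν z) ∈ cubeRoots ↔ z ∈ cubeRoots
  rw [← (injOn_moebius ha hν₀).mem_image_iff cubeRoots_subset_sphere hz, himg]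
  exact (and_iff_right (mapsTo_moebius ha hν hz)).symm
end

section
/- Let φ : 𝕋 → 𝕋 be a homeomorphism of the unit circle whose mean value with respect to arclength measure is zero, i.e., ∫_𝕋 φ(ζ) |dζ| = 0. Then φ is normalized, i.e., for every arc γ ⊂ 𝕋 of length 2π/3 the image φ(γ) has length at most 4π/3. -/
open Complex Metric Set Real MeasureTheory

/-! Let `γ` be an arc of length `2π/3` and `δ` the complementary open arc. The image
`U = φ(δ)` is connected and misses `φ(γ)`; lifting it through an angle coordinate on the circle
slit at a point of `φ(γ)` squeezes it between an open and a closed arc with the same endpoints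
`a ≤ b`. If `b - a ≥ 2π/3`, then `φ(γ)` lies in the closed arc of length `4π/3` starting at `b`.
Otherwise, with `ζ = e^{i(a+b)/2}`, `Re (conj ζ * φ) > 1/2` on `δ` and `≥ -1` on `γ`, so
`Re (conj ζ * ∫ φ) > 0`, contradicting `∫ φ = 0`. -/

open ComplexConjugate

noncomputable def expI (t : ℝ) : ℂ := Complex.exp (t * Complex.I)

lemma continuous_expI : Continuous expI := by unfold expI; fun_prop

lemma norm_expI (t : ℝ) : ‖expI t‖ = 1 := Complex.norm_exp_ofReal_mul_I t

lemma expI_mem_sphere (t : ℝ) : expI t ∈ sphere (0 : ℂ) 1 := by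
  simp [norm_expI]

lemma image_expI_subset_sphere (s : Set ℝ) : expI '' s ⊆ sphere (0 : ℂ) 1 :=
  image_subset_iff.2 fun t _ => expI_mem_sphere t

lemma expI_add (s t : ℝ) : expI (s + t) = expI s * expI t := by
  simp only [expI, ofReal_add, add_mul, Complex.exp_add]

lemma expI_pi : expI π = -1 := Complex.exp_pi_mul_I

lemma conj_expI (t : ℝ) : conj (expI t) = expI (-t) := by
  simp only [expI, ← Complex.exp_conj, map_mul, conj_ofReal, conj_I, ofReal_neg, neg_mul, mul_neg]

lemma re_expI (t : ℝ) : (expI t).re = Real.cos t := Complex.exp_ofReal_mul_I_re t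

lemma expI_arg {z : ℂ} (hz : ‖z‖ = 1) : expI (arg z) = z := by
  simpa [expI, hz] using norm_mul_exp_arg_mul_I z

lemma periodic_expI : Function.Periodic expI (2 * π) := fun t =>
  congrArg Subtype.val (Circle.periodic_exp t)

lemma injOn_expI_Ico (a : ℝ) : InjOn expI (Ico a (a + 2 * π)) := fun s hs t ht h =>
  Circle.exp_injOn_Ico (by linarith) hs ht (Subtype.ext h)

lemma exists_mem_Ioc_expI_eq {z : ℂ} (hz : z ∈ sphere (0 : ℂ) 1) (a : ℝ) :
    ∃ t ∈ Ioc a (a + 2 * π), expI t = z :=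
  ⟨_, toIocMod_mem_Ioc two_pi_pos a (arg z), by
    rw [toIocMod, periodic_expI.sub_zsmul_eq, expI_arg (by simpa using hz)]⟩

lemma disjoint_arcCC_image_Ioo (a b : ℝ) :
    Disjoint (arcCC a b) (expI '' Ioo b (a + 2 * π)) := by
  rw [Set.disjoint_left]
  rintro _ ⟨s, hs, rfl⟩ ⟨t, ht, hts⟩
  have hs' : s ∈ Ico a (a + 2 * π) := ⟨hs.1, by linarith [hs.2, ht.1, ht.2]⟩
  have ht' : t ∈ Ico a (a + 2 * π) := ⟨by linarith [hs.1, hs.2, ht.1], ht.2⟩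
  linarith [hs.2, ht.1, injOn_expI_Ico a hs' ht' hts.symm]

lemma sphere_diff_image_Ioo_subset_arcCC (a b : ℝ) :
    sphere (0 : ℂ) 1 \ expI '' Ioo a b ⊆ arcCC b (a + 2 * π) := by
  rintro z ⟨hz, hzab⟩
  obtain ⟨t, ht, rfl⟩ := exists_mem_Ioc_expI_eq hz a
  exact ⟨t, ⟨not_lt.1 fun htb => hzab ⟨t, ⟨ht.1, htb⟩, rfl⟩, ht.2⟩, rfl⟩

open scoped ComplexOrder in
lemma neg_div_mem_slitPlane {w p : ℂ} (hp : p ≠ 0) (hwp : ‖w‖ = ‖p‖) (hne : w ≠ p) :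
    -(w / p) ∈ slitPlane := by
  rw [mem_slitPlane_iff_not_le_zero, neg_nonpos]
  intro h
  have h1 : w / p = 1 := by
    rw [eq_coe_norm_of_nonneg h, norm_div, hwp, div_self (norm_ne_zero_iff.2 hp), ofReal_one]
  exact hne ((div_eq_one_iff_eq hp).1 h1)

lemma exists_image_Ioo_subset_subset_arcCC {U : Set ℂ} (hU : IsPreconnected U)
    (hUs : U ⊆ sphere (0 : ℂ) 1) {p : ℂ} (hp : ‖p‖ = 1) (hpU : p ∉ U) :
    ∃ a b : ℝ, a ≤ b ∧ expI '' Ioo a b ⊆ U ∧ U ⊆ arcCC a b := by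
  rcases U.eq_empty_or_nonempty with rfl | hne
  · exact ⟨0, 0, le_rfl, by simp, empty_subset _⟩
  have hnorm : ∀ w ∈ U, ‖w‖ = 1 := fun w hw => by simpa using hUs hw
  have hp0 : p ≠ 0 := norm_ne_zero_iff.1 (by rw [hp]; exact one_ne_zero)
  set τ : ℂ → ℝ := fun w => arg p + π + arg (-(w / p))
  have hτ : ∀ w ∈ U, expI (τ w) = w := fun w hw => by
    rw [expI_add, expI_add, expI_arg hp, expI_pi,
      expI_arg (by rw [norm_neg, norm_div, hnorm w hw, hp, div_one])]
    field_simp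
  have hτcont : ContinuousOn τ U := fun w hw => by
    have hslit := neg_div_mem_slitPlane hp0 ((hnorm w hw).trans hp.symm)
      (ne_of_mem_of_not_mem hw hpU)
    have := (continuousAt_arg hslit).comp (f := fun w => -(w / p)) (by fun_prop)
    exact (this.const_add _).continuousWithinAt
  have hS : IsConnected (τ '' U) := ⟨hne.image τ, hU.image τ hτcont⟩
  have hbelow : BddBelow (τ '' U) :=
    ⟨arg p, by rintro _ ⟨w, -, rfl⟩; linarith [neg_pi_lt_arg (-(w / p))]⟩
  have habove : BddAbove (τ '' U) :=
    ⟨arg p + 2 * π, by rintro _ ⟨w, -, rfl⟩; linarith [arg_le_pi (-(w / p))]⟩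
  refine ⟨sInf (τ '' U), sSup (τ '' U), csInf_le_csSup hS.nonempty hbelow habove, ?_, ?_⟩
  · rintro _ ⟨t, ht, rfl⟩
    obtain ⟨w, hw, rfl⟩ := hS.Ioo_csInf_csSup_subset hbelow habove ht
    rwa [hτ w hw]
  · intro w hw
    exact ⟨τ w, ⟨csInf_le hbelow ⟨w, hw, rfl⟩, le_csSup habove ⟨w, hw, rfl⟩⟩, hτ w hw⟩

lemma le_intervalIntegral_of_le_of_le {F : ℝ → ℝ} (hF : Continuous F) {a b c l m : ℝ}
    (hab : a ≤ b) (hbc : b ≤ c) (hl : ∀ t ∈ Ioo a b, l ≤ F t) (hm : ∀ t ∈ Ioo b c, m ≤ F t) :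
    l * (b - a) + m * (c - b) ≤ ∫ t in a..c, F t := by
  rw [← intervalIntegral.integral_add_adjacent_intervals (hF.intervalIntegrable a b)
    (hF.intervalIntegrable b c)]
  have hlow := intervalIntegral.integral_mono_on_of_le_Ioo (μ := volume) hab
    intervalIntegrable_const (hF.intervalIntegrable a b) hl
  have hhigh := intervalIntegral.integral_mono_on_of_le_Ioo (μ := volume) hbc
    intervalIntegrable_const (hF.intervalIntegrable b c) hm
  simp only [intervalIntegral.integral_const, smul_eq_mul] at hlow hhigh
  linarith

lemma cos_le_re_conj_mul_of_mem_arcCC {a b : ℝ} {w : ℂ} (hab : b - a ≤ 2 * π)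
    (hw : w ∈ arcCC a b) : Real.cos ((b - a) / 2) ≤ (conj (expI ((a + b) / 2)) * w).re := by
  obtain ⟨s, hs, rfl⟩ : w ∈ expI '' Icc a b := hw
  rw [conj_expI, ← expI_add, re_expI, ← Real.cos_abs (-((a + b) / 2) + s)]
  exact Real.cos_le_cos_of_nonneg_of_le_pi (abs_nonneg _) (by linarith)
    (abs_le.2 ⟨by linarith [hs.1], by linarith [hs.2]⟩)

lemma two_pi_div_three_le_sub_of_integral_eq_zero {f : ℝ → ℂ} (hf : Continuous f)
    (hf1 : ∀ t, ‖f t‖ ≤ 1) {θ a b : ℝ} (hab : a ≤ b) (hmean : ∫ t in θ..θ + 2 * π, f t = 0)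
    (harc : ∀ t ∈ Ioo (θ + 2 * π / 3) (θ + 2 * π), f t ∈ arcCC a b) :
    2 * π / 3 ≤ b - a := by
  by_contra! hshort
  set ζ := expI ((a + b) / 2)
  set F : ℝ → ℝ := fun t => (conj ζ * f t).re
  have hlow : ∀ t, -1 ≤ F t := fun t => by
    have hnorm : ‖conj ζ * f t‖ ≤ 1 := by
      rw [norm_mul, RCLike.norm_conj, norm_expI, one_mul]; exact hf1 t
    exact (abs_le.1 ((abs_re_le_norm _).trans hnorm)).1
  have hcos : 1 / 2 < Real.cos ((b - a) / 2) := by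
    rw [← Real.cos_pi_div_three]
    exact Real.cos_lt_cos_of_nonneg_of_le_pi (by linarith) (by linarith) (by linarith)
  have hint : ∫ t in θ..θ + 2 * π, F t = 0 := by
    have h := reCLM.intervalIntegral_comp_comm ((by fun_prop : Continuous fun t => conj ζ * f t)
      |>.intervalIntegrable (μ := volume) θ (θ + 2 * π))
    rwa [intervalIntegral.integral_const_mul, hmean, mul_zero, map_zero] at h
  have := le_intervalIntegral_of_le_of_le (F := F) (by fun_prop)
    (by linarith [pi_pos] : θ ≤ θ + 2 * π / 3) (by linarith [pi_pos]) (fun t _ => hlow t)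
    (fun t ht => cos_le_re_conj_mul_of_mem_arcCC (by linarith) (harc t ht))
  nlinarith [pi_pos]

/-- A circle homeomorphism with zero mean value with respect to arclength
(`∫_𝕋 φ(ζ) |dζ| = ∫₀^{2π} φ(e^{it}) dt = 0`) is normalized. -/
theorem isNormalized_of_mean_zero (φ : ℂ → ℂ)
    (hcont : ContinuousOn φ (sphere (0:ℂ) 1))
    (hbij : BijOn φ (sphere (0:ℂ) 1) (sphere (0:ℂ) 1))
    (hmean : (∫ t in (0:ℝ)..(2 * π), φ (Complex.exp (t * Complex.I))) = 0) :
    IsNormalized φ := by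
  intro θ
  set γ := arcCC θ (θ + 2 * π / 3)
  set δ := expI '' Ioo (θ + 2 * π / 3) (θ + 2 * π)
  have hγ : γ ⊆ sphere (0 : ℂ) 1 := image_expI_subset_sphere _
  have hδ : δ ⊆ sphere (0 : ℂ) 1 := image_expI_subset_sphere _
  have hdisj : Disjoint (φ '' γ) (φ '' δ) := by
    rw [disjoint_iff_inter_eq_empty, ← hbij.injOn.image_inter hγ hδ,
      (disjoint_arcCC_image_Ioo θ (θ + 2 * π / 3)).inter_eq, image_empty]
  obtain ⟨a, b, hab, hIoo, hU⟩ := exists_image_Ioo_subset_subset_arcCC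
    ((isPreconnected_Ioo.image _ continuous_expI.continuousOn).image φ (hcont.mono hδ))
    (hbij.mapsTo.mono_left hδ).image_subset (by simpa using hbij.mapsTo (expI_mem_sphere θ))
    (hdisj.notMem_of_mem_left ⟨expI θ, ⟨θ, ⟨le_rfl, by linarith [pi_pos]⟩, rfl⟩, rfl⟩)
  have hlong : 2 * π / 3 ≤ b - a :=
    two_pi_div_three_le_sub_of_integral_eq_zero (hcont.comp_continuous continuous_expI
      expI_mem_sphere) (fun t => (mem_sphere_zero_iff_norm.1 (hbij.mapsTo (expI_mem_sphere t))).le)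
      hab (((periodic_expI.comp φ).intervalIntegral_add_eq θ 0).trans (by rwa [zero_add]))
      (fun t ht => hU ⟨expI t, ⟨t, ht, rfl⟩, rfl⟩)
  refine ⟨b, fun w hw => ?_⟩
  have hw' : w ∈ arcCC b (a + 2 * π) := sphere_diff_image_Ioo_subset_arcCC a b
    ⟨(hbij.mapsTo.mono_left hγ).image_subset hw, fun h => hdisj.notMem_of_mem_left hw (hIoo h)⟩
  exact image_mono (Icc_subset_Icc_right (by linarith)) hw'
end

section
/- Let z = re^{iθ} ∈ 𝔻 with e^{−4π} ≤ r < 1, and let γ₂, γ₃ be the arcs associated with z. Then the harmonic measure satisfies ω(z, γ_j, 𝔻) = (1/(2π)) ∫_{γ_j} (1−|z|²)/|ζ−z|² |dζ| ≥ 1/(112π) for j = 2, 3. -/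
open Complex Metric Set Real MeasureTheory

/-!
Write `δ = log (1/r)`. For `|t - θ| ≤ δ` the squared chord
`|e^{it} - r e^{iθ}|² = (1 - r)² + 2r(1 - cos (t - θ))` is at most `2δ²`, since `1 - r ≤ δ` and
`1 - cos s ≤ s²/2`. Hence the Poisson kernel is at least `(1 - r²)/(2δ²)` on `γ₂` and `γ₃`, arcs of
length `δ/2`, so each has harmonic measure at least `(1 - r²)/(8πδ)`. Finally `r ≥ e^{-4π}` gives
`δ ≤ 14(1 - r)`, which turns this into `1/(112π)`.
-/

noncomputable def diskPoissonKernel (z : ℂ) (t : ℝ) : ℝ :=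
  (1 - ‖z‖ ^ 2) / ‖exp (t * I) - z‖ ^ 2

lemma norm_exp_mul_I_sub_ofReal_mul_exp_mul_I_sq (r θ t : ℝ) :
    ‖exp (t * I) - r * exp (θ * I)‖ ^ 2 = 1 - 2 * r * Real.cos (t - θ) + r ^ 2 := by
  rw [Complex.sq_norm, Complex.normSq_apply]
  simp only [sub_re, sub_im, re_ofReal_mul, im_ofReal_mul, exp_ofReal_mul_I_re,
    exp_ofReal_mul_I_im, Real.cos_sub]
  linear_combination Real.sin_sq_add_cos_sq t + r ^ 2 * Real.sin_sq_add_cos_sq θ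

lemma norm_exp_mul_I_sub_ofReal_mul_exp_mul_I_sq_le {r θ t δ : ℝ} (hr0 : 0 ≤ r) (hr1 : r ≤ 1)
    (hδ : 1 - r ≤ δ) (ht : |t - θ| ≤ δ) :
    ‖exp (t * I) - r * exp (θ * I)‖ ^ 2 ≤ 2 * δ ^ 2 := by
  have hcos := Real.one_sub_sq_div_two_le_cos (x := t - θ)
  have hsq : (t - θ) ^ 2 ≤ δ ^ 2 := sq_le_sq' (abs_le.mp ht).1 (abs_le.mp ht).2
  rw [norm_exp_mul_I_sub_ofReal_mul_exp_mul_I_sq]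
  nlinarith [mul_le_mul_of_nonneg_left hcos hr0]

lemma sq_one_sub_le_norm_exp_mul_I_sub_ofReal_mul_exp_mul_I_sq {r : ℝ} (hr0 : 0 ≤ r) (θ t : ℝ) :
    (1 - r) ^ 2 ≤ ‖exp (t * I) - r * exp (θ * I)‖ ^ 2 := by
  rw [norm_exp_mul_I_sub_ofReal_mul_exp_mul_I_sq]
  nlinarith [mul_le_mul_of_nonneg_left (Real.cos_le_one (t - θ)) hr0]

lemma div_two_sq_le_diskPoissonKernel {r θ t δ : ℝ} (hr0 : 0 ≤ r) (hr1 : r < 1)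
    (hδ : 1 - r ≤ δ) (ht : |t - θ| ≤ δ) :
    (1 - r ^ 2) / (2 * δ ^ 2) ≤ diskPoissonKernel (r * exp (θ * I)) t := by
  have hz : ‖(r : ℂ) * exp (θ * I)‖ = r := by
    rw [norm_mul, norm_exp_ofReal_mul_I, mul_one, norm_real, Real.norm_of_nonneg hr0]
  rw [diskPoissonKernel, hz]
  apply div_le_div_of_nonneg_left (by nlinarith)
  · exact (pow_pos (sub_pos.mpr hr1) 2).trans_le
      (sq_one_sub_le_norm_exp_mul_I_sub_ofReal_mul_exp_mul_I_sq hr0 θ t)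
  · exact norm_exp_mul_I_sub_ofReal_mul_exp_mul_I_sq_le hr0 hr1.le hδ ht

lemma continuous_diskPoissonKernel {z : ℂ} (hz : ‖z‖ < 1) : Continuous (diskPoissonKernel z) := by
  have hne : ∀ t : ℝ, exp (t * I) - z ≠ 0 := fun t h => by
    rw [sub_eq_zero] at h
    simp [← h, norm_exp_ofReal_mul_I] at hz
  unfold diskPoissonKernel
  exact continuous_const.div (by fun_prop) fun t => pow_ne_zero 2 (norm_ne_zero_iff.mpr (hne t))

lemma mul_le_integral_diskPoissonKernel {r θ a b δ : ℝ} (hr0 : 0 ≤ r) (hr1 : r < 1)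
    (hδ : 1 - r ≤ δ) (hab : a ≤ b) (ha : θ - δ ≤ a) (hb : b ≤ θ + δ) :
    (b - a) * ((1 - r ^ 2) / (2 * δ ^ 2)) ≤
      ∫ t in a..b, diskPoissonKernel (r * exp (θ * I)) t := by
  have hz : ‖(r : ℂ) * exp (θ * I)‖ < 1 := by
    rwa [norm_mul, norm_exp_ofReal_mul_I, mul_one, norm_real, Real.norm_of_nonneg hr0]
  rw [← smul_eq_mul, ← intervalIntegral.integral_const]
  refine intervalIntegral.integral_mono_on hab intervalIntegrable_const
    ((continuous_diskPoissonKernel hz).intervalIntegrable a b) fun t ht => ?_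
  exact div_two_sq_le_diskPoissonKernel hr0 hr1 hδ
    (abs_le.mpr ⟨by linarith [ht.1], by linarith [ht.2]⟩)

lemma one_sub_le_log_one_div {r : ℝ} (hr0 : 0 < r) : 1 - r ≤ Real.log (1 / r) := by
  rw [one_div, Real.log_inv]
  linarith [Real.log_le_sub_one_of_pos hr0]

lemma log_one_div_le_fourteen_mul_one_sub {r : ℝ} (hr : Real.exp (-(4 * π)) ≤ r) (hr1 : r ≤ 1) :
    Real.log (1 / r) ≤ 14 * (1 - r) := by
  have hr0 : 0 < r := (Real.exp_pos _).trans_le hr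
  -- `log x ≤ x - 1` handles `r ≥ 1/14`; below that, `log (1/r) ≤ 4π < 13`.
  rcases le_or_gt (1 / 14 : ℝ) r with h | h
  · calc Real.log (1 / r) ≤ 1 / r - 1 := Real.log_le_sub_one_of_pos (by positivity)
      _ = (1 - r) / r := by field_simp
      _ ≤ 14 * (1 - r) := by
        rw [div_le_iff₀ hr0]; nlinarith
  · have hlog : Real.log (1 / r) ≤ 4 * π := by
      rw [one_div, Real.log_inv, neg_le, Real.le_log_iff_exp_le hr0]
      exact hr
    linarith [Real.pi_lt_d2]

lemma one_div_fifty_six_le_integral_diskPoissonKernel {r θ a b : ℝ} (hr0 : 0 < r) (hr1 : r < 1)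
    (h14 : Real.log (1 / r) ≤ 14 * (1 - r)) (hab : b - a = Real.log (1 / r) / 2)
    (ha : θ - Real.log (1 / r) ≤ a) (hb : b ≤ θ + Real.log (1 / r)) :
    1 / 56 ≤ ∫ t in a..b, diskPoissonKernel (r * exp (θ * I)) t := by
  set δ := Real.log (1 / r)
  have h1r : 1 - r ≤ δ := one_sub_le_log_one_div hr0
  have hδ : 0 < δ := (sub_pos.mpr hr1).trans_le h1r
  refine le_trans ?_ (mul_le_integral_diskPoissonKernel hr0.le hr1 h1r (by linarith) ha hb)
  rw [hab, show δ / 2 * ((1 - r ^ 2) / (2 * δ ^ 2)) = (1 - r ^ 2) / (4 * δ) by field_simp; ring,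
    div_le_div_iff₀ (by norm_num) (by positivity)]
  nlinarith

/-- **Lemma (lower harmonic measure bound, arcs γ₂, γ₃).**
For `z = r e^{iθ}` with `e^{−4π} ≤ r < 1` and `δ = log(1/r)`, the harmonic measure of
each of the arcs `γ₂ = {e^{it} : θ−δ ≤ t ≤ θ−δ/2}` and `γ₃ = {e^{it} : θ+δ/2 ≤ t ≤ θ+δ}`
at `z` in the unit disk, `ω(z,γⱼ,𝔻) = (1/2π)∫_{γⱼ} (1−|z|²)/|ζ−z|² |dζ|`,
is at least `1/(112π)`. -/
theorem harmonic_measure_gamma23_lower (r θ : ℝ)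
    (hr1 : Real.exp (-(4 * π)) ≤ r) (hr2 : r < 1) :
    1 / (112 * π) ≤ (1 / (2 * π)) *
      ∫ t in (θ - Real.log (1 / r))..(θ - Real.log (1 / r) / 2),
        (1 - ‖((r : ℂ) * Complex.exp (θ * Complex.I))‖ ^ 2) /
          ‖(Complex.exp (t * Complex.I) -
            (r : ℂ) * Complex.exp (θ * Complex.I))‖ ^ 2 ∧
    1 / (112 * π) ≤ (1 / (2 * π)) *
      ∫ t in (θ + Real.log (1 / r) / 2)..(θ + Real.log (1 / r)),
        (1 - ‖((r : ℂ) * Complex.exp (θ * Complex.I))‖ ^ 2) /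
          ‖(Complex.exp (t * Complex.I) -
            (r : ℂ) * Complex.exp (θ * Complex.I))‖ ^ 2 := by
  have hr0 : 0 < r := (Real.exp_pos _).trans_le hr1
  have h14 := log_one_div_le_fourteen_mul_one_sub hr1 hr2.le
  have hδ : 0 < Real.log (1 / r) := (sub_pos.mpr hr2).trans_le (one_sub_le_log_one_div hr0)
  rw [show 1 / (112 * π) = 1 / (2 * π) * (1 / 56) by ring]
  constructor <;> refine mul_le_mul_of_nonneg_left ?_ (by positivity)
  · exact one_div_fifty_six_le_integral_diskPoissonKernel hr0 hr2 h14 (by ring) le_rfl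
      (by linarith)
  · exact one_div_fifty_six_le_integral_diskPoissonKernel hr0 hr2 h14 (by ring) (by linarith)
      le_rfl
end

section
/- Let g be a diffeomorphism of the upper half-plane ℍ onto itself satisfying g(z+2π) = g(z) + 2π and |Im g(z) − Im z| ≤ 4π for all z ∈ ℍ. Then the formula Ψ(e^{iz}) = exp(i·g(z)) gives a well-defined diffeomorphism Ψ of the punctured disk 𝔻∖{0} onto itself, and for every z ∈ ℍ one has ‖DΨ(e^{iz})‖ ≤ e^{4π}·‖Dg(z)‖ and ‖DΨ(e^{iz})⁻¹‖ ≤ e^{4π}·‖Dg(z)⁻¹‖. -/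
open Complex Metric Set Real

/-!
Read `g` in the coordinate `w = e^{iz}`: `Ψ w = exp (i g(-i log w))`. Since `e^{iz} = e^{iz'}`
exactly when `z - z' ∈ 2πℤ`, the periodicity of `g` makes this independent of the branch of
the logarithm, and bijectivity of `g` descends to `Ψ`. Near `w₀ = e^{iz}` the branch
`z - i log (w / w₀)` inverts `e^{i·}`, so by the chain rule
`DΨ(w₀) = (i e^{i g z}) · Dg(z) · (-i / w₀)`; the two scalar factors have moduli `e^{-Im g z}`
and `e^{Im z}`, whose product and its inverse are at most `e^{|Im g z - Im z|} ≤ e^{4π}`.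
-/

noncomputable def mulSandwich (a b : ℂˣ) (A : ℂ ≃L[ℝ] ℂ) : ℂ ≃L[ℝ] ℂ :=
  (ContinuousLinearEquiv.smulLeft b).trans (A.trans (ContinuousLinearEquiv.smulLeft a))

lemma mulSandwich_apply (a b : ℂˣ) (A : ℂ ≃L[ℝ] ℂ) (x : ℂ) :
    mulSandwich a b A x = a * A (b * x) := by
  simp [mulSandwich, Units.smul_def]

lemma mulSandwich_symm (a b : ℂˣ) (A : ℂ ≃L[ℝ] ℂ) :
    (mulSandwich a b A).symm = mulSandwich b⁻¹ a⁻¹ A.symm := by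
  ext x
  rw [ContinuousLinearEquiv.symm_apply_eq, mulSandwich_apply, mulSandwich_apply]
  simp

lemma norm_mulSandwich_le (a b : ℂˣ) (A : ℂ ≃L[ℝ] ℂ) :
    ‖(mulSandwich a b A : ℂ →L[ℝ] ℂ)‖ ≤ ‖(a : ℂ)‖ * ‖(b : ℂ)‖ * ‖(A : ℂ →L[ℝ] ℂ)‖ := by
  refine ContinuousLinearMap.opNorm_le_bound _ (by positivity) fun x => ?_
  rw [ContinuousLinearEquiv.coe_coe, mulSandwich_apply, norm_mul]
  calc ‖(a : ℂ)‖ * ‖A (b * x)‖ ≤ ‖(a : ℂ)‖ * (‖(A : ℂ →L[ℝ] ℂ)‖ * ‖(b : ℂ) * x‖) := by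
        gcongr; exact (A : ℂ →L[ℝ] ℂ).le_opNorm _
    _ = ‖(a : ℂ)‖ * ‖(b : ℂ)‖ * ‖(A : ℂ →L[ℝ] ℂ)‖ * ‖x‖ := by rw [norm_mul]; ring

lemma norm_mulSandwich_le_exp {a b : ℂˣ} {s t C : ℝ} (ha : ‖(a : ℂ)‖ = Real.exp (-s))
    (hb : ‖(b : ℂ)‖ = Real.exp t) (hst : |s - t| ≤ C) (A : ℂ ≃L[ℝ] ℂ) :
    ‖(mulSandwich a b A : ℂ →L[ℝ] ℂ)‖ ≤ Real.exp C * ‖(A : ℂ →L[ℝ] ℂ)‖ ∧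
      ‖((mulSandwich a b A).symm : ℂ →L[ℝ] ℂ)‖ ≤ Real.exp C * ‖(A.symm : ℂ →L[ℝ] ℂ)‖ := by
  obtain ⟨hlo, hhi⟩ := abs_le.1 hst
  constructor
  · calc _ ≤ ‖(a : ℂ)‖ * ‖(b : ℂ)‖ * ‖(A : ℂ →L[ℝ] ℂ)‖ := norm_mulSandwich_le a b A
      _ = Real.exp (t - s) * ‖(A : ℂ →L[ℝ] ℂ)‖ := by
        rw [ha, hb, ← Real.exp_add, neg_add_eq_sub]
      _ ≤ _ := by gcongr; linarith
  · rw [mulSandwich_symm]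
    calc _ ≤ ‖((b⁻¹ : ℂˣ) : ℂ)‖ * ‖((a⁻¹ : ℂˣ) : ℂ)‖ * ‖(A.symm : ℂ →L[ℝ] ℂ)‖ :=
          norm_mulSandwich_le _ _ _
      _ = Real.exp (s - t) * ‖(A.symm : ℂ →L[ℝ] ℂ)‖ := by
        rw [Units.val_inv_eq_inv_val, Units.val_inv_eq_inv_val, norm_inv, norm_inv, ha, hb,
          ← Real.exp_neg, ← Real.exp_neg, ← Real.exp_add, neg_neg, neg_add_eq_sub]
      _ ≤ _ := by gcongr

lemma HasDerivAt.hasFDerivAt_smulLeft {f : ℂ → ℂ} {u : ℂˣ} {x : ℂ} (h : HasDerivAt f u x) :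
    HasFDerivAt f ((ContinuousLinearEquiv.smulLeft u : ℂ ≃L[ℝ] ℂ) : ℂ →L[ℝ] ℂ) x :=
  (h.hasFDerivAt.restrictScalars ℝ).congr_fderiv <| by
    ext; simp [Units.smul_def, mul_comm]

lemma exp_I_mul_eq_exp_I_mul_iff {z z' : ℂ} :
    exp (I * z) = exp (I * z') ↔ ∃ n : ℤ, z = z' + n * (2 * π) := by
  rw [exp_eq_exp_iff_exists_int]
  refine exists_congr fun n => ⟨fun h => mul_left_cancel₀ I_ne_zero ?_, fun h => ?_⟩ <;>
    rw [h] <;> ring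

lemma norm_exp_I_mul (z : ℂ) : ‖exp (I * z)‖ = Real.exp (-z.im) := by
  simp [norm_exp]

lemma exp_I_mul_mem_ball_diff {z : ℂ} (hz : 0 < z.im) :
    exp (I * z) ∈ ball (0 : ℂ) 1 \ {0} := by
  refine ⟨?_, exp_ne_zero _⟩
  rw [mem_ball_zero_iff, norm_exp_I_mul, Real.exp_lt_one_iff]
  linarith

lemma exp_I_mul_neg_I_mul_log {w : ℂ} (hw : w ≠ 0) : exp (I * (-I * log w)) = w := by
  rw [← mul_assoc, mul_neg, I_mul_I, neg_neg, one_mul, exp_log hw]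

lemma im_neg_I_mul_log_pos {w : ℂ} (hw : w ∈ ball (0 : ℂ) 1 \ {0}) : 0 < (-I * log w).im := by
  have hlog : Real.log ‖w‖ < 0 :=
    Real.log_neg (norm_pos_iff.2 hw.2) (mem_ball_zero_iff.1 hw.1)
  simpa [log_re] using hlog

lemma exists_localInverse_exp_I_mul (z : ℂ) :
    ∃ φ : ℂ → ℂ, φ (exp (I * z)) = z ∧ HasDerivAt φ (-I / exp (I * z)) (exp (I * z)) ∧
      ∀ w ≠ 0, exp (I * φ w) = w := by
  set w₀ := exp (I * z)
  have hw₀ : w₀ ≠ 0 := exp_ne_zero _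
  refine ⟨fun w => z + -I * log (w / w₀), by simp [hw₀], ?_, fun w hw => ?_⟩
  · have hlog : HasDerivAt (fun w => log (w / w₀)) (1 / w₀) w₀ := by
      simpa [hw₀] using ((hasDerivAt_id w₀).div_const w₀).clog (by simp [hw₀])
    simpa [div_eq_mul_inv] using (hlog.const_mul (-I)).const_add z
  · rw [mul_add, Complex.exp_add, exp_I_mul_neg_I_mul_log (div_ne_zero hw hw₀)]
    exact mul_div_cancel₀ w hw₀

lemma map_add_int_mul_of_map_add {g : ℂ → ℂ} {c : ℂ} (hc : c.im = 0)
    (hper : ∀ z : ℂ, 0 < z.im → g (z + c) = g z + c) (n : ℤ) {z : ℂ} (hz : 0 < z.im) :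
    g (z + n * c) = g z + n * c := by
  induction n using Int.induction_on with
  | zero => simp
  | succ k ih =>
    have hk : 0 < (z + k * c).im := by simp [hc, hz]
    push_cast at ih ⊢
    rw [add_mul, one_mul, ← add_assoc, hper _ hk, ih]
    ring
  | pred k ih =>
    have hk : 0 < (z + (-k - 1 : ℤ) * c).im := by simp [hc, hz]
    have h := hper _ hk
    push_cast at h ih ⊢
    rw [show z + (-k - 1) * c + c = z + -k * c by ring, ih] at h
    linear_combination -h

lemma exp_I_mul_map_eq_of_exp_I_mul_eq {g : ℂ → ℂ}
    (hper : ∀ z : ℂ, 0 < z.im → g (z + 2 * π) = g z + 2 * π) {z z' : ℂ} (hz' : 0 < z'.im)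
    (h : exp (I * z) = exp (I * z')) : exp (I * g z) = exp (I * g z') := by
  obtain ⟨n, rfl⟩ := exp_I_mul_eq_exp_I_mul_iff.1 h
  rw [map_add_int_mul_of_map_add (by simp) hper n hz']
  exact exp_I_mul_eq_exp_I_mul_iff.2 ⟨n, rfl⟩

lemma exp_I_mul_eq_of_exp_I_mul_map_eq {g : ℂ → ℂ} (hinj : InjOn g {z : ℂ | 0 < z.im})
    (hper : ∀ z : ℂ, 0 < z.im → g (z + 2 * π) = g z + 2 * π) {z z' : ℂ} (hz : 0 < z.im)
    (hz' : 0 < z'.im) (h : exp (I * g z) = exp (I * g z')) : exp (I * z) = exp (I * z') := by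
  obtain ⟨n, hn⟩ := exp_I_mul_eq_exp_I_mul_iff.1 h
  have hz'n : 0 < (z' + n * (2 * π)).im := by simpa using hz'
  rw [hinj hz hz'n (by rw [map_add_int_mul_of_map_add (by simp) hper n hz', hn])]
  exact exp_I_mul_eq_exp_I_mul_iff.2 ⟨n, rfl⟩

noncomputable def diskMap (g : ℂ → ℂ) (w : ℂ) : ℂ := exp (I * g (-I * log w))

lemma diskMap_exp_I_mul {g : ℂ → ℂ} (hper : ∀ z : ℂ, 0 < z.im → g (z + 2 * π) = g z + 2 * π)
    {z : ℂ} (hz : 0 < z.im) : diskMap g (exp (I * z)) = exp (I * g z) :=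
  exp_I_mul_map_eq_of_exp_I_mul_eq hper hz (exp_I_mul_neg_I_mul_log (exp_ne_zero _))

lemma bijOn_diskMap {g : ℂ → ℂ} (hbij : BijOn g {z : ℂ | 0 < z.im} {z : ℂ | 0 < z.im})
    (hper : ∀ z : ℂ, 0 < z.im → g (z + 2 * π) = g z + 2 * π) :
    BijOn (diskMap g) (ball (0 : ℂ) 1 \ {0}) (ball (0 : ℂ) 1 \ {0}) := by
  refine ⟨fun w hw => exp_I_mul_mem_ball_diff (hbij.mapsTo (im_neg_I_mul_log_pos hw)),
    fun w₁ hw₁ w₂ hw₂ h => ?_, fun w hw => ?_⟩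
  · rw [← exp_I_mul_neg_I_mul_log hw₁.2, ← exp_I_mul_neg_I_mul_log hw₂.2]
    exact exp_I_mul_eq_of_exp_I_mul_map_eq hbij.injOn hper (im_neg_I_mul_log_pos hw₁)
      (im_neg_I_mul_log_pos hw₂) h
  · obtain ⟨z, hz, hgz⟩ := hbij.surjOn (im_neg_I_mul_log_pos hw)
    exact ⟨exp (I * z), exp_I_mul_mem_ball_diff hz,
      by rw [diskMap_exp_I_mul hper hz, hgz, exp_I_mul_neg_I_mul_log hw.2]⟩

lemma hasFDerivAt_diskMap {g : ℂ → ℂ}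
    (hper : ∀ z : ℂ, 0 < z.im → g (z + 2 * π) = g z + 2 * π) {z : ℂ} (hz : 0 < z.im)
    {Dg : ℂ ≃L[ℝ] ℂ} (hDg : HasFDerivAt g (Dg : ℂ →L[ℝ] ℂ) z) {u₁ u₂ : ℂˣ}
    (hu₁ : (u₁ : ℂ) = I * exp (I * g z)) (hu₂ : (u₂ : ℂ) = -I / exp (I * z)) :
    HasFDerivAt (diskMap g) (mulSandwich u₁ u₂ Dg : ℂ →L[ℝ] ℂ) (exp (I * z)) := by
  obtain ⟨φ, hφz, hφ, hexpφ⟩ := exists_localInverse_exp_I_mul z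
  have hexp : HasDerivAt (fun ζ => exp (I * ζ)) u₁ (g (φ (exp (I * z)))) := by
    rw [hφz, hu₁, mul_comm]
    exact ((hasDerivAt_id _).const_mul I).cexp.congr_deriv (by simp)
  have hg : HasFDerivAt g (Dg : ℂ →L[ℝ] ℂ) (φ (exp (I * z))) := by rwa [hφz]
  have hcomp : HasFDerivAt (fun w => exp (I * g (φ w))) (mulSandwich u₁ u₂ Dg : ℂ →L[ℝ] ℂ)
      (exp (I * z)) :=
    (hexp.hasFDerivAt_smulLeft.comp (exp (I * z)) (hg.comp _ (hu₂ ▸ hφ).hasFDerivAt_smulLeft) :)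
  have hφ_im : ∀ᶠ w in nhds (exp (I * z)), 0 < (φ w).im ∧ w ≠ 0 :=
    ((continuous_im.continuousAt.comp hφ.continuousAt).eventually_const_lt (by simpa [hφz])).and
      (eventually_ne_nhds (exp_ne_zero _))
  refine hcomp.congr_of_eventuallyEq ?_
  filter_upwards [hφ_im] with w ⟨hw, hw₀⟩
  rw [← diskMap_exp_I_mul hper hw, hexpφ w hw₀]

theorem punctured_disk_transfer_general (g : ℂ → ℂ)
    (hbij : BijOn g {z : ℂ | 0 < z.im} {z : ℂ | 0 < z.im})
    (hper : ∀ z : ℂ, 0 < z.im → g (z + 2 * π) = g z + 2 * π)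
    (him : ∀ z : ℂ, 0 < z.im → |(g z).im - z.im| ≤ 4 * π) :
    ∃ Ψ : ℂ → ℂ,
      (∀ z : ℂ, 0 < z.im → Ψ (Complex.exp (Complex.I * z)) =
        Complex.exp (Complex.I * g z)) ∧
      BijOn Ψ (ball (0:ℂ) 1 \ {0}) (ball (0:ℂ) 1 \ {0}) ∧
      ∀ z : ℂ, 0 < z.im → ∀ Dg : ℂ ≃L[ℝ] ℂ, HasFDerivAt g (Dg : ℂ →L[ℝ] ℂ) z →
        ∃ D : ℂ ≃L[ℝ] ℂ,
          HasFDerivAt Ψ (D : ℂ →L[ℝ] ℂ) (Complex.exp (Complex.I * z)) ∧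
          ‖(D : ℂ →L[ℝ] ℂ)‖ ≤ Real.exp (4 * π) * ‖(Dg : ℂ →L[ℝ] ℂ)‖ ∧
          ‖(D.symm : ℂ →L[ℝ] ℂ)‖ ≤ Real.exp (4 * π) * ‖(Dg.symm : ℂ →L[ℝ] ℂ)‖ := by
  refine ⟨diskMap g, fun z hz => diskMap_exp_I_mul hper hz, bijOn_diskMap hbij hper,
    fun z hz Dg hDg => ?_⟩
  let u₁ := Units.mk0 (I * exp (I * g z)) (mul_ne_zero I_ne_zero (exp_ne_zero _))
  let u₂ := Units.mk0 (-I / exp (I * z)) (div_ne_zero (neg_ne_zero.2 I_ne_zero) (exp_ne_zero _))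
  have hu₁ : ‖(u₁ : ℂ)‖ = Real.exp (-(g z).im) := by simp [u₁, norm_exp_I_mul]
  have hu₂ : ‖(u₂ : ℂ)‖ = Real.exp z.im := by simp [u₂, norm_exp_I_mul, Real.exp_neg]
  exact ⟨mulSandwich u₁ u₂ Dg, hasFDerivAt_diskMap hper hz hDg rfl rfl,
    norm_mulSandwich_le_exp hu₁ hu₂ (him z hz) Dg⟩

/-- **Transfer from the half-plane to the punctured disk.**
Let `g` be a diffeomorphism of the upper half-plane `ℍ` onto itself with
`g(z+2π) = g(z)+2π` and `|Im g(z) − Im z| ≤ 4π`.  Then `Ψ(e^{iz}) := exp(i·g(z))` is a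
well-defined diffeomorphism of the punctured disk `𝔻 ∖ {0}` onto itself, and
`‖DΨ(e^{iz})‖ ≤ e^{4π}·‖Dg(z)‖`, `‖DΨ(e^{iz})⁻¹‖ ≤ e^{4π}·‖Dg(z)⁻¹‖` for `z ∈ ℍ`. -/
theorem punctured_disk_transfer (g : ℂ → ℂ)
    (hbij : BijOn g {z : ℂ | 0 < z.im} {z : ℂ | 0 < z.im})
    (hdiff : ∀ z : ℂ, 0 < z.im → ∃ D : ℂ ≃L[ℝ] ℂ, HasFDerivAt g (D : ℂ →L[ℝ] ℂ) z)
    (hper : ∀ z : ℂ, 0 < z.im → g (z + 2 * π) = g z + 2 * π)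
    (him : ∀ z : ℂ, 0 < z.im → |(g z).im - z.im| ≤ 4 * π) :
    ∃ Ψ : ℂ → ℂ,
      (∀ z : ℂ, 0 < z.im → Ψ (Complex.exp (Complex.I * z)) =
        Complex.exp (Complex.I * g z)) ∧
      BijOn Ψ (ball (0:ℂ) 1 \ {0}) (ball (0:ℂ) 1 \ {0}) ∧
      ∀ z : ℂ, 0 < z.im → ∀ Dg : ℂ ≃L[ℝ] ℂ, HasFDerivAt g (Dg : ℂ →L[ℝ] ℂ) z →
        ∃ D : ℂ ≃L[ℝ] ℂ,
          HasFDerivAt Ψ (D : ℂ →L[ℝ] ℂ) (Complex.exp (Complex.I * z)) ∧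
          ‖(D : ℂ →L[ℝ] ℂ)‖ ≤ Real.exp (4 * π) * ‖(Dg : ℂ →L[ℝ] ℂ)‖ ∧
          ‖(D.symm : ℂ →L[ℝ] ℂ)‖ ≤ Real.exp (4 * π) * ‖(Dg.symm : ℂ →L[ℝ] ℂ)‖ :=
  punctured_disk_transfer_general g hbij hper him
end

section
/- Let Ω ⊂ ℂ be a nonempty open set, M ≥ 0, and let G be a continuous map from the closure of Ω to ℂ which is differentiable on Ω with ‖DG(z)‖ ≤ M for all z ∈ Ω, and whose restriction to ∂Ω satisfies |G(c) − G(d)| ≤ M·|c−d| for all c, d ∈ ∂Ω. Then G is M-Lipschitz on the closure of Ω: |G(a) − G(b)| ≤ M·|a−b| for all a, b in the closure of Ω. -/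
open Set AffineMap

/-!
On a segment whose interior lies in `Ω`, the mean value inequality gives the bound `M`, and
continuity carries it to the endpoints. A segment `[a, b]` leaving `Ω` is cut at the first and
last parameters `t₁ ≤ t₂` where it lies outside `Ω`; the points `c`, `d` there are on `∂Ω`, so
the three pieces `[a, c]`, `[c, d]`, `[d, b]` are handled by the segment bound, the boundary
hypothesis and the segment bound again, and their lengths add up to `|a - b|`.
-/

variable {E F : Type*} [NormedAddCommGroup E] [NormedSpace ℝ E]
  [NormedAddCommGroup F] [NormedSpace ℝ F]

theorem Convex.norm_image_sub_le_of_norm_fderiv_le_of_mem_closure {s : Set E} {f : E → F}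
    {C : ℝ} {x y : E} (hs : Convex ℝ s) (hcont : ContinuousOn f (closure s))
    (hf : ∀ z ∈ s, DifferentiableAt ℝ f z) (bound : ∀ z ∈ s, ‖fderiv ℝ f z‖ ≤ C)
    (hx : x ∈ closure s) (hy : y ∈ closure s) :
    ‖f y - f x‖ ≤ C * ‖y - x‖ := by
  have hxy : (x, y) ∈ closure (s ×ˢ s) := by rw [closure_prod_eq]; exact ⟨hx, hy⟩
  have hmaps : MapsTo Prod.snd (s ×ˢ s) (closure s) := fun p hp => subset_closure hp.2
  refine ContinuousWithinAt.closure_le (f := fun p : E × E => ‖f p.2 - f p.1‖) hxy ?_ ?_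
    fun p hp => hs.norm_image_sub_le_of_norm_fderiv_le hf bound hp.1 hp.2
  · exact (((hcont y hy).comp continuousWithinAt_snd hmaps).sub
      ((hcont x hx).comp continuousWithinAt_fst fun p hp => subset_closure hp.1)).norm
  · exact (continuousWithinAt_snd.sub continuousWithinAt_fst).norm.const_mul C

section Segment

variable {Ω : Set E} {a b : E} {s₁ s₂ : ℝ}

theorem openSegment_lineMap_subset (hlt : s₁ < s₂)
    (h : ∀ t ∈ Ioo s₁ s₂, lineMap a b t ∈ Ω) :
    openSegment ℝ (lineMap a b s₁) (lineMap a b s₂) ⊆ Ω := by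
  rw [← image_openSegment, openSegment_eq_Ioo hlt]
  exact image_subset_iff.2 h

theorem lineMap_mem_closure_of_forall_Ioo (hlt : s₁ < s₂)
    (h : ∀ t ∈ Ioo s₁ s₂, lineMap a b t ∈ Ω) :
    lineMap a b s₁ ∈ closure Ω ∧ lineMap a b s₂ ∈ closure Ω := by
  have hsub := closure_mono (openSegment_lineMap_subset hlt h)
  rw [closure_openSegment] at hsub
  exact ⟨hsub (left_mem_segment ℝ _ _), hsub (right_mem_segment ℝ _ _)⟩

theorem dist_image_le_of_openSegment_subset {G : E → F} {M : ℝ} {u v : E}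
    (hcont : ContinuousOn G (closure Ω)) (hf : ∀ z ∈ Ω, DifferentiableAt ℝ G z)
    (bound : ∀ z ∈ Ω, ‖fderiv ℝ G z‖ ≤ M) (hseg : openSegment ℝ u v ⊆ Ω) :
    dist (G u) (G v) ≤ M * dist u v := by
  have hu : u ∈ closure (openSegment ℝ u v) := by
    rw [closure_openSegment]; exact left_mem_segment ℝ u v
  have hv : v ∈ closure (openSegment ℝ u v) := by
    rw [closure_openSegment]; exact right_mem_segment ℝ u v
  rw [dist_eq_norm', dist_eq_norm']
  exact (convex_openSegment u v).norm_image_sub_le_of_norm_fderiv_le_of_mem_closure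
    (hcont.mono (closure_mono hseg)) (fun z hz => hf z (hseg hz))
    (fun z hz => bound z (hseg hz)) hu hv

theorem dist_image_lineMap_le {G : E → F} {M : ℝ}
    (hcont : ContinuousOn G (closure Ω)) (hf : ∀ z ∈ Ω, DifferentiableAt ℝ G z)
    (bound : ∀ z ∈ Ω, ‖fderiv ℝ G z‖ ≤ M) (hle : s₁ ≤ s₂)
    (h : ∀ t ∈ Ioo s₁ s₂, lineMap a b t ∈ Ω) :
    dist (G (lineMap a b s₁)) (G (lineMap a b s₂)) ≤ M * (dist s₁ s₂ * dist a b) := by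
  rw [← dist_lineMap_lineMap]
  rcases hle.eq_or_lt with rfl | hlt
  · simp
  · exact dist_image_le_of_openSegment_subset hcont hf bound (openSegment_lineMap_subset hlt h)

theorem exists_first_and_last_frontier_lineMap (hΩ : IsOpen Ω) (ha : a ∈ closure Ω)
    (hb : b ∈ closure Ω)
    (hout : ∃ t ∈ Icc (0 : ℝ) 1, lineMap a b t ∉ Ω) :
    ∃ t₁ t₂ : ℝ, 0 ≤ t₁ ∧ t₁ ≤ t₂ ∧ t₂ ≤ 1 ∧
      lineMap a b t₁ ∈ frontier Ω ∧ lineMap a b t₂ ∈ frontier Ω ∧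
      (∀ t ∈ Ioo 0 t₁, lineMap a b t ∈ Ω) ∧ ∀ t ∈ Ioo t₂ 1, lineMap a b t ∈ Ω := by
  set K := Icc (0 : ℝ) 1 ∩ lineMap a b ⁻¹' Ωᶜ
  have hK : IsCompact K :=
    isCompact_Icc.inter_right (hΩ.isClosed_compl.preimage lineMap_continuous)
  obtain ⟨t₁, ⟨⟨h0t₁, ht₁1⟩, ht₁Ω⟩, ht₁min⟩ := hK.exists_isLeast hout
  obtain ⟨t₂, ⟨⟨h0t₂, ht₂1⟩, ht₂Ω⟩, ht₂max⟩ := hK.exists_isGreatest hout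
  have below : ∀ t ∈ Ioo 0 t₁, lineMap a b t ∈ Ω := fun t ht => by
    by_contra hΩt
    exact (ht₁min ⟨⟨ht.1.le, ht.2.le.trans ht₁1⟩, hΩt⟩).not_gt ht.2
  have above : ∀ t ∈ Ioo t₂ 1, lineMap a b t ∈ Ω := fun t ht => by
    by_contra hΩt
    exact (ht₂max ⟨⟨h0t₂.trans ht.1.le, ht.2.le⟩, hΩt⟩).not_gt ht.1
  have hc : lineMap a b t₁ ∈ closure Ω := by
    rcases h0t₁.eq_or_lt with rfl | hpos
    · simpa using ha
    · exact (lineMap_mem_closure_of_forall_Ioo hpos below).2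
  have hd : lineMap a b t₂ ∈ closure Ω := by
    rcases ht₂1.eq_or_lt with rfl | hlt
    · simpa using hb
    · exact (lineMap_mem_closure_of_forall_Ioo hlt above).1
  rw [hΩ.frontier_eq]
  exact ⟨t₁, t₂, h0t₁, ht₁min ⟨⟨h0t₂, ht₂1⟩, ht₂Ω⟩, ht₂1, ⟨hc, ht₁Ω⟩, ⟨hd, ht₂Ω⟩, below, above⟩

end Segment

theorem lipschitz_on_closure_of_deriv_and_boundary_general (Ω : Set ℂ) (hΩ : IsOpen Ω)
    (M : ℝ) (G : ℂ → ℂ)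
    (hcont : ContinuousOn G (closure Ω))
    (hdiff : ∀ z ∈ Ω, DifferentiableAt ℝ G z ∧ ‖fderiv ℝ G z‖ ≤ M)
    (hbdry : ∀ c ∈ frontier Ω, ∀ d ∈ frontier Ω, dist (G c) (G d) ≤ M * dist c d) :
    ∀ a ∈ closure Ω, ∀ b ∈ closure Ω, dist (G a) (G b) ≤ M * dist a b := by
  intro a ha b hb
  have hf : ∀ z ∈ Ω, DifferentiableAt ℝ G z := fun z hz => (hdiff z hz).1
  have bound : ∀ z ∈ Ω, ‖fderiv ℝ G z‖ ≤ M := fun z hz => (hdiff z hz).2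
  by_cases hout : ∃ t ∈ Icc (0 : ℝ) 1, lineMap a b t ∉ Ω
  · obtain ⟨t₁, t₂, h0t₁, ht₁₂, ht₂1, hc, hd, below, above⟩ :=
      exists_first_and_last_frontier_lineMap hΩ ha hb hout
    calc dist (G a) (G b) = dist (G (lineMap a b (0 : ℝ))) (G (lineMap a b (1 : ℝ))) := by simp
      _ ≤ dist (G (lineMap a b (0 : ℝ))) (G (lineMap a b t₁)) +
            dist (G (lineMap a b t₁)) (G (lineMap a b t₂)) +
            dist (G (lineMap a b t₂)) (G (lineMap a b (1 : ℝ))) := dist_triangle4 _ _ _ _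
      _ ≤ M * (dist 0 t₁ * dist a b) + M * (dist t₁ t₂ * dist a b) +
            M * (dist t₂ 1 * dist a b) := by
        gcongr
        · exact dist_image_lineMap_le hcont hf bound h0t₁ below
        · exact (hbdry _ hc _ hd).trans_eq (by rw [dist_lineMap_lineMap])
        · exact dist_image_lineMap_le hcont hf bound ht₂1 above
      _ = M * dist a b := by
        simp only [Real.dist_eq, abs_of_nonpos (sub_nonpos.2 h0t₁),
          abs_of_nonpos (sub_nonpos.2 ht₁₂), abs_of_nonpos (sub_nonpos.2 ht₂1)]
        ring
  · push Not at hout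
    simpa using dist_image_lineMap_le hcont hf bound zero_le_one
      fun t ht => hout t (Ioo_subset_Icc_self ht)

/-- **Lipschitz bound on a non-convex closure.** Let `Ω ⊆ ℂ` be a nonempty open set and
`M ≥ 0`.  If `G` is continuous on `closure Ω`, differentiable on `Ω` with `‖DG(z)‖ ≤ M`,
and `M`-Lipschitz on the boundary `∂Ω`, then `G` is `M`-Lipschitz on `closure Ω`. -/
theorem lipschitz_on_closure_of_deriv_and_boundary (Ω : Set ℂ) (hΩ : IsOpen Ω)
    (hne : Ω.Nonempty) (M : ℝ) (hM : 0 ≤ M) (G : ℂ → ℂ)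
    (hcont : ContinuousOn G (closure Ω))
    (hdiff : ∀ z ∈ Ω, DifferentiableAt ℝ G z ∧ ‖fderiv ℝ G z‖ ≤ M)
    (hbdry : ∀ c ∈ frontier Ω, ∀ d ∈ frontier Ω, dist (G c) (G d) ≤ M * dist c d) :
    ∀ a ∈ closure Ω, ∀ b ∈ closure Ω, dist (G a) (G b) ≤ M * dist a b :=
  lipschitz_on_closure_of_deriv_and_boundary_general Ω hΩ M G hcont hdiff hbdry
end

section
/- For every constant C < √2 there exists an injective 1-Lipschitz map f : 𝕋 → ℂ such that every homeomorphism F from the closed unit disk onto its image in ℂ extending f satisfies Lip(F) > C. Hence any universal constant C with the property that every Lipschitz embedding f : 𝕋 → ℂ admits a homeomorphic extension F to the closed disk with Lip(F) ≤ C·Lip(f) must satisfy C ≥ √2. -/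
open Complex Metric Set

/-!
Fold the arc `re z > a` of the unit circle across the line `re z = a`. The resulting
1-Lipschitz embedding `fold a` bounds the crescent `crescent a`, on which `‖w‖² > 1 - 4a`.
An extension `F` fixes `±i`, so if it is `C`-Lipschitz the parallelogram law gives
`‖F 0‖² + 1 ≤ C²`. But `F 0` lies in the crescent: on the circle `F - (a - 1)` stays within
distance `1` of the identity, so `F` takes the value `a - 1 ∈ crescent a` in the open disk, and
by injectivity the connected set `F '' ball 0 1` misses the boundary curve `fold a '' sphere 0 1`.
Hence `C² > 2 - 4a` for every `a > 0`.
-/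

theorem exists_continuous_log_of_ne_zero {X : Type*} [TopologicalSpace X]
    [SimplyConnectedSpace X] [LocallyPathConnectedSpace X] (f : C(X, ℂ)) (hf : ∀ x, f x ≠ 0) :
    ∃ L : C(X, ℂ), ∀ x, exp (L x) = f x := by
  obtain ⟨x₀⟩ := (inferInstance : Nonempty X)
  obtain ⟨L, ⟨-, hL⟩, -⟩ :=
    isCoveringMapOn_exp.existsUnique_continuousMap_lifts f (exp_log (hf x₀)) hf
  exact ⟨L, congrFun hL⟩

theorem not_exists_continuousOn_log_sphere :
    ¬ ∃ L : ℂ → ℂ, ContinuousOn L (sphere 0 1) ∧ ∀ z ∈ sphere (0 : ℂ) 1, exp (L z) = z := by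
  rintro ⟨L, hLc, hL⟩
  have hmem (t : ℝ) : exp (t * I) ∈ sphere (0 : ℂ) 1 := by simp
  set g : ℝ → ℂ := fun t ↦ L (exp (t * I)) - t * I
  have hg : Continuous g :=
    (hLc.comp_continuous (by fun_prop) hmem).sub (by fun_prop)
  have hexp (t : ℝ) : exp (g t) = 1 := by
    simp only [g, exp_sub, hL _ (hmem t), div_self (exp_ne_zero _)]
  have := isCoveringMap_exp.const_of_comp hg (fun t t' ↦ Subtype.ext (by simp [hexp]))
    0 (2 * Real.pi)
  simp only [g, ofReal_zero, zero_mul, exp_zero, sub_zero, ofReal_mul, ofReal_ofNat] at this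
  rw [exp_two_pi_mul_I] at this
  exact two_pi_I_ne_zero (by linear_combination this)

theorem exists_continuous_log_of_ne_zero_on_closedBall {φ : ℂ → ℂ}
    (hφ : ContinuousOn φ (closedBall 0 1)) (hne : ∀ z ∈ closedBall (0 : ℂ) 1, φ z ≠ 0) :
    ∃ L : ℂ → ℂ, Continuous L ∧ ∀ z ∈ closedBall (0 : ℂ) 1, exp (L z) = φ z := by
  set r : ℂ → ℂ := fun z ↦ (max 1 ‖z‖)⁻¹ • z
  have hr (z : ℂ) : r z ∈ closedBall (0 : ℂ) 1 := by
    rw [mem_closedBall_zero_iff, norm_smul, norm_inv, Real.norm_of_nonneg (by positivity),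
      inv_mul_le_one₀ (by positivity)]
    exact le_max_right _ _
  have hr' (z : ℂ) (hz : z ∈ closedBall (0 : ℂ) 1) : r z = z := by
    simp [r, max_eq_left (mem_closedBall_zero_iff.mp hz)]
  have hrc : Continuous r :=
    ((continuous_const.max continuous_norm).inv₀ fun z ↦ by positivity).smul continuous_id
  obtain ⟨L, hL⟩ := exists_continuous_log_of_ne_zero ⟨φ ∘ r, hφ.comp_continuous hrc hr⟩
    (fun z ↦ hne _ (hr z))
  exact ⟨L, L.continuous, fun z hz ↦ by simpa [hr' z hz] using hL z⟩

theorem exists_mem_ball_eq_zero_of_norm_sub_lt {φ : ℂ → ℂ}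
    (hφ : ContinuousOn φ (closedBall 0 1)) (h : ∀ z ∈ sphere (0 : ℂ) 1, ‖φ z - z‖ < 1) :
    ∃ z ∈ ball (0 : ℂ) 1, φ z = 0 := by
  have hz0 (z : ℂ) (hz : z ∈ sphere (0 : ℂ) 1) : z ≠ 0 :=
    ne_zero_of_mem_sphere one_ne_zero ⟨z, hz⟩
  have hsphere (z : ℂ) (hz : z ∈ sphere (0 : ℂ) 1) : φ z ≠ 0 := fun hφz ↦ by
    simpa [hφz, mem_sphere_zero_iff_norm.mp hz] using h z hz
  by_contra! hball
  have hne (z : ℂ) (hz : z ∈ closedBall (0 : ℂ) 1) : φ z ≠ 0 := by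
    rw [← ball_union_sphere] at hz
    exact hz.elim (hball z) (hsphere z)
  obtain ⟨L, hLc, hL⟩ := exists_continuous_log_of_ne_zero_on_closedBall hφ hne
  -- on the circle `φ z / z` stays in the disk of radius one about `1`, where `log` is continuous
  have hslit (z : ℂ) (hz : z ∈ sphere (0 : ℂ) 1) : φ z / z ∈ slitPlane := by
    have := mem_slitPlane_of_norm_lt_one (z := (φ z - z) / z) (by
      rw [norm_div, mem_sphere_zero_iff_norm.mp hz, div_one]; exact h z hz)
    rwa [one_add_div (hz0 z hz), add_sub_cancel] at this
  refine not_exists_continuousOn_log_sphere ⟨fun z ↦ L z - log (φ z / z), ?_, fun z hz ↦ ?_⟩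
  · exact hLc.continuousOn.sub
      (((hφ.mono sphere_subset_closedBall).div continuousOn_id hz0).clog hslit)
  · rw [exp_sub, exp_log (div_ne_zero (hsphere z hz) (hz0 z hz)),
      hL z (sphere_subset_closedBall hz)]
    field_simp [hsphere z hz]

theorem sq_norm_sub_ofReal (w : ℂ) (c : ℝ) : ‖w - c‖ ^ 2 = (w.re - c) ^ 2 + w.im ^ 2 := by
  rw [Complex.sq_norm, normSq_apply, sub_re, sub_im, ofReal_re, ofReal_im, sub_zero]
  ring

theorem sq_norm_eq_re_sq_add_im_sq (w : ℂ) : ‖w‖ ^ 2 = w.re ^ 2 + w.im ^ 2 := by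
  simpa using sq_norm_sub_ofReal w 0

theorem sq_norm_add_one_le_of_dist_I_le {w : ℂ} {C : ℝ} (h₁ : dist w I ≤ C)
    (h₂ : dist w (-I) ≤ C) : ‖w‖ ^ 2 + 1 ≤ C ^ 2 := by
  have e₁ : dist w I ^ 2 = w.re ^ 2 + (w.im - 1) ^ 2 := by
    rw [dist_eq_re_im, Real.sq_sqrt (by positivity)]; simp
  have e₂ : dist w (-I) ^ 2 = w.re ^ 2 + (w.im + 1) ^ 2 := by
    rw [dist_eq_re_im, Real.sq_sqrt (by positivity)]; simp
  nlinarith [sq_norm_eq_re_sq_add_im_sq w, pow_le_pow_left₀ dist_nonneg h₁ 2,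
    pow_le_pow_left₀ dist_nonneg h₂ 2]

def fold (a : ℝ) (z : ℂ) : ℂ := ⟨min z.re (2 * a - z.re), z.im⟩

def crescent (a : ℝ) : Set ℂ := ball 0 1 \ closedBall ((2 * a : ℝ) : ℂ) 1

section
variable {a : ℝ} {z : ℂ}

@[simp] theorem fold_re : (fold a z).re = min z.re (2 * a - z.re) := rfl

@[simp] theorem fold_im : (fold a z).im = z.im := rfl

theorem fold_of_re_le (h : z.re ≤ a) : fold a z = z :=
  Complex.ext (min_eq_left (by linarith)) rfl

theorem dist_fold_le (p q : ℂ) : dist (fold a p) (fold a q) ≤ dist p q := by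
  have hmin : |min p.re (2 * a - p.re) - min q.re (2 * a - q.re)| ≤ |p.re - q.re| :=
    (abs_min_sub_min_le_max _ _ _ _).trans <| by
      rw [show 2 * a - p.re - (2 * a - q.re) = -(p.re - q.re) by ring, abs_neg, max_self]
  rw [dist_eq_re_im, dist_eq_re_im]
  exact Real.sqrt_le_sqrt (by simp only [fold_re, fold_im]; linarith [sq_le_sq.mpr hmin])

theorem injOn_fold (ha : 0 < a) : InjOn (fold a) (sphere 0 1) := by
  intro p hp q hq hpq
  have him : p.im = q.im := by simpa using congrArg Complex.im hpq
  have hre : min p.re (2 * a - p.re) = min q.re (2 * a - q.re) := by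
    simpa using congrArg Complex.re hpq
  have hp' := sq_norm_eq_re_sq_add_im_sq p
  have hq' := sq_norm_eq_re_sq_add_im_sq q
  rw [mem_sphere_zero_iff_norm.mp hp] at hp'
  rw [mem_sphere_zero_iff_norm.mp hq] at hq'
  have hsq : p.re ^ 2 = q.re ^ 2 := by linarith [him ▸ hp']
  refine Complex.ext ?_ him
  rcases le_total p.re a with h₁ | h₁ <;> rcases le_total q.re a with h₂ | h₂
  · rwa [min_eq_left (by linarith), min_eq_left (by linarith)] at hre
  · rw [min_eq_left (by linarith), min_eq_right (by linarith)] at hre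
    exact mul_left_cancel₀ (by linarith : 0 < p.re + q.re).ne' (by linear_combination hsq)
  · rw [min_eq_right (by linarith), min_eq_left (by linarith)] at hre
    exact mul_left_cancel₀ (by linarith : 0 < p.re + q.re).ne' (by linear_combination hsq)
  · rw [min_eq_right (by linarith), min_eq_right (by linarith)] at hre
    linarith

theorem fold_I (ha : 0 ≤ a) : fold a I = I := fold_of_re_le (by simpa using ha)

theorem fold_neg_I (ha : 0 ≤ a) : fold a (-I) = -I := fold_of_re_le (by simpa using ha)

theorem norm_fold_sub_sub_lt (ha : 0 < a) (ha₂ : a < 2) (hz : z ∈ sphere 0 1) :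
    ‖fold a z - (a - 1) - z‖ < 1 := by
  have hre : |z.re| ≤ 1 := (abs_re_le_norm z).trans (mem_sphere_zero_iff_norm.mp hz).le
  have : fold a z - (a - 1) - z = ((min z.re (2 * a - z.re) - (a - 1) - z.re : ℝ) : ℂ) := by
    apply Complex.ext <;> simp
  rw [this, norm_real, Real.norm_eq_abs, abs_lt]
  constructor <;> cases min_cases z.re (2 * a - z.re) <;> linarith [abs_le.mp hre]

theorem sub_one_mem_crescent (ha : 0 < a) (ha₂ : a < 2) : (a - 1 : ℂ) ∈ crescent a := by
  have h₁ : (a - 1 : ℂ) = ((a - 1 : ℝ) : ℂ) := by push_cast; ring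
  have h₂ : (a - 1 : ℂ) - ((2 * a : ℝ) : ℂ) = ((-(a + 1) : ℝ) : ℂ) := by push_cast; ring
  simp only [crescent, mem_sdiff, mem_ball_zero_iff, mem_closedBall, dist_eq_norm, h₂, not_le]
  rw [h₁, norm_real, norm_real, Real.norm_eq_abs, Real.norm_eq_abs, abs_lt,
    abs_of_neg (by linarith)]
  exact ⟨⟨by linarith, by linarith⟩, by linarith⟩

theorem compl_image_fold_sphere_subset (ha : 0 < a) :
    (fold a '' sphere 0 1)ᶜ ⊆ crescent a ∪ (ball ((2 * a : ℝ) : ℂ) 1 ∪ (closedBall 0 1)ᶜ) := by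
  intro w hw
  by_contra h
  simp only [crescent, mem_union, mem_sdiff, mem_ball, mem_closedBall, mem_compl_iff,
    dist_eq_norm, sub_zero, not_or, not_and, not_lt, not_le] at h
  obtain ⟨hcres, hfar, hin⟩ := h
  apply hw
  have hw₀ := sq_norm_eq_re_sq_add_im_sq w
  have hw₁ := sq_norm_sub_ofReal w (2 * a)
  rcases hin.lt_or_eq with hlt | heq
  · rw [le_antisymm (hcres hlt) hfar] at hw₁
    have hre : w.re ≤ a := by nlinarith [pow_lt_one₀ (norm_nonneg w) hlt two_ne_zero]
    refine ⟨⟨2 * a - w.re, w.im⟩, ?_, Complex.ext ((min_eq_right (by linarith)).trans (by ring)) rfl⟩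
    rw [mem_sphere_zero_iff_norm, ← pow_eq_one_iff_of_nonneg (norm_nonneg _) two_ne_zero,
      sq_norm_eq_re_sq_add_im_sq]
    linear_combination -hw₁
  · rw [heq] at hw₀
    have hre : w.re ≤ a := by nlinarith
    exact ⟨w, mem_sphere_zero_iff_norm.mpr heq, fold_of_re_le hre⟩

theorem IsPreconnected.subset_crescent (ha : 0 < a) {S : Set ℂ} (hS : IsPreconnected S)
    (hdisj : Disjoint S (fold a '' sphere 0 1)) (hne : (S ∩ crescent a).Nonempty) :
    S ⊆ crescent a := by
  refine hS.subset_left_of_subset_union (isOpen_ball.sdiff isClosed_closedBall)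
    (isOpen_ball.union isClosed_closedBall.isOpen_compl) ?_
    (fun x hx ↦ compl_image_fold_sphere_subset ha (hdisj.notMem_of_mem_left hx)) hne
  rw [Set.disjoint_union_right]
  exact ⟨disjoint_sdiff_left.mono_right ball_subset_closedBall,
    (disjoint_compl_right.mono_left ball_subset_closedBall).mono_left sdiff_subset⟩

theorem one_lt_sq_norm_add_of_mem_crescent (ha : 0 ≤ a) {w : ℂ} (hw : w ∈ crescent a) :
    1 < ‖w‖ ^ 2 + 4 * a := by
  have h₁ : 1 < ‖w‖ + 2 * a := by
    have := hw.2
    rw [mem_closedBall, dist_eq_norm, not_le] at this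
    calc 1 < ‖w - ((2 * a : ℝ) : ℂ)‖ := this
      _ ≤ ‖w‖ + ‖((2 * a : ℝ) : ℂ)‖ := norm_sub_le _ _
      _ = ‖w‖ + 2 * a := by rw [norm_real, Real.norm_of_nonneg (by positivity)]
  have h₂ : ‖w‖ < 1 := mem_ball_zero_iff.mp hw.1
  nlinarith [norm_nonneg w]

end

theorem map_zero_mem_crescent_of_eqOn_fold {a : ℝ} (ha : 0 < a) (ha₂ : a < 2) {F : ℂ → ℂ}
    (hFc : ContinuousOn F (closedBall 0 1)) (hFi : InjOn F (closedBall 0 1))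
    (hFf : EqOn F (fold a) (sphere 0 1)) : F 0 ∈ crescent a := by
  have hdisj : Disjoint (F '' ball 0 1) (fold a '' sphere 0 1) := by
    rw [← hFf.image_eq]
    exact sphere_disjoint_ball.symm.image hFi ball_subset_closedBall sphere_subset_closedBall
  obtain ⟨z, hz, hFz⟩ := exists_mem_ball_eq_zero_of_norm_sub_lt (φ := fun z ↦ F z - (a - 1))
    (hFc.sub continuousOn_const) fun z hz ↦ hFf hz ▸ norm_fold_sub_sub_lt ha ha₂ hz
  have hpre : IsPreconnected (F '' ball 0 1) :=
    (convex_ball 0 1).isPreconnected.image F (hFc.mono ball_subset_closedBall)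
  refine hpre.subset_crescent ha hdisj ⟨F z, mem_image_of_mem F hz, ?_⟩
    (mem_image_of_mem F (mem_ball_self one_pos))
  rw [sub_eq_zero.mp hFz]
  exact sub_one_mem_crescent ha ha₂

/-- **No extension constant below √2.** For every `C < √2` there is an injective
1-Lipschitz map `f` of the unit circle into the plane such that every homeomorphism `F`
of the closed unit disk onto its image extending `f` satisfies `Lip(F) > C`; hence any
universal constant `C` with `Lip(F) ≤ C·Lip(f)` for homeomorphic extensions of circle
embeddings must satisfy `C ≥ √2`. -/
theorem extension_constant_ge_sqrt_two (C : ℝ) (hC : C < Real.sqrt 2) :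
    ∃ f : ℂ → ℂ, InjOn f (sphere (0:ℂ) 1) ∧
      (∀ p ∈ sphere (0:ℂ) 1, ∀ q ∈ sphere (0:ℂ) 1, dist (f p) (f q) ≤ dist p q) ∧
      ∀ F : ℂ → ℂ, ContinuousOn F (closedBall (0:ℂ) 1) →
        InjOn F (closedBall (0:ℂ) 1) →
        EqOn F f (sphere (0:ℂ) 1) →
        ∃ p ∈ closedBall (0:ℂ) 1, ∃ q ∈ closedBall (0:ℂ) 1,
          C * dist p q < dist (F p) (F q) := by
  have hCsq : max C 0 ^ 2 < 2 := by
    have := max_lt hC (Real.sqrt_pos.mpr two_pos)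
    nlinarith [Real.sq_sqrt zero_le_two, le_max_right C 0]
  obtain ⟨a, ha, ha₂, hCa⟩ : ∃ a : ℝ, 0 < a ∧ a < 2 ∧ max C 0 ^ 2 = 2 - 4 * a :=
    ⟨(2 - max C 0 ^ 2) / 4, by linarith, by nlinarith [sq_nonneg (max C 0)], by ring⟩
  refine ⟨fold a, injOn_fold ha, fun p _ q _ ↦ dist_fold_le p q, fun F hFc hFi hFf ↦ ?_⟩
  by_contra! hF
  have hI : I ∈ sphere (0 : ℂ) 1 := by simp
  have hnegI : -I ∈ sphere (0 : ℂ) 1 := by simp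
  have h₁ : dist (F 0) I ≤ C := by
    simpa [hFf hI, fold_I ha.le] using hF 0 (by simp) I (sphere_subset_closedBall hI)
  have h₂ : dist (F 0) (-I) ≤ C := by
    simpa [hFf hnegI, fold_neg_I ha.le] using hF 0 (by simp) (-I) (sphere_subset_closedBall hnegI)
  have hcres := one_lt_sq_norm_add_of_mem_crescent ha.le
    (map_zero_mem_crescent_of_eqOn_fold ha ha₂ hFc hFi hFf)
  nlinarith [sq_norm_add_one_le_of_dist_I_le h₁ h₂, le_max_left C 0, dist_nonneg.trans h₁]
end
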